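/- arXiv:1310.2564 — 9 statements merged into one kernel-verified Lean document; each statement's English description precedes it below -/
import Mathlib

section
/- (Chen, 1975) Let λ > 0 and let f : ℕ → ℝ be bounded. The following are equivalent: (i) there exists a bounded function g : ℕ → ℝ such that λ·g(k+1) − k·g(k) = f(k) for all k ∈ ℕ; (ii) ∑_{j=0}^∞ f(j)·e^{−λ} λ^j / j! = 0. Moreover, when these hold, the function g given by g(0) = 0 and g(k+1) = (k!/λ^{k+1}) ∑_{j=0}^{k} (λ^j/j!) f(j) for each k ∈ ℕ solves the equation in (i) and satisfies sup_{k∈ℕ} |g(k)| ≤ e^{λ} · sup_{k∈ℕ} |f(k)|. -/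
/-!
Against the Poisson weights the Stein operator telescopes: with `v k = k λ^k/k! g(k)` one has
`(λ g(k+1) - k g(k)) λ^k/k! = v(k+1) - v(k)`, and `v(k+1) = λ · λ^k/k! · g(k+1) → 0` for
bounded `g`, so the Poisson mean of `f` vanishes. Conversely `steinSol` solves the equation by
construction; when `∑ λ^j/j! f(j) = 0` its partial sum up to `k` equals minus the tail from
`k+1` on, and since `(i+k+1)! ≥ i! (k+1)!` that tail is at most `λ^(k+1)/(k+1)! · e^λ sup |f|`,
giving `|g(k+1)| ≤ e^λ sup |f| / (k+1)`.
-/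

/-- The explicit solution of the Stein equation for the Poisson distribution:
`g(0) = 0` and `g(k+1) = (k!/λ^{k+1}) ∑_{j=0}^{k} (λ^j/j!) f(j)`. -/
noncomputable def steinSol (l : ℝ) (f : ℕ → ℝ) : ℕ → ℝ
  | 0 => 0
  | k + 1 =>
      ((Nat.factorial k : ℝ) / l ^ (k + 1)) *
        ∑ j ∈ Finset.range (k + 1), (l ^ j / (Nat.factorial j : ℝ)) * f j

open Finset Filter Topology
open scoped Nat

lemma Real.hasSum_pow_div_factorial (x : ℝ) : HasSum (fun n ↦ x ^ n / n !) (Real.exp x) :=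
  Real.exp_eq_exp_ℝ ▸ NormedSpace.expSeries_div_hasSum_exp x

lemma pow_add_div_factorial_le {x : ℝ} (hx : 0 ≤ x) (i n : ℕ) :
    x ^ (i + n) / (i + n)! ≤ x ^ n / n ! * (x ^ i / i !) := by
  have hfac : ((i ! * n ! : ℕ) : ℝ) ≤ (i + n)! :=
    Nat.cast_le.2 <| Nat.le_of_dvd (Nat.factorial_pos _) <|
      Nat.factorial_mul_factorial_dvd_factorial_add i n
  push_cast at hfac
  rw [pow_add, div_mul_div_comm, mul_comm (x ^ n)]
  gcongr
  rwa [mul_comm]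

lemma summable_pow_div_factorial_mul {f : ℕ → ℝ} {C : ℝ} (hf : ∀ k, |f k| ≤ C)
    (x : ℝ) : Summable fun j ↦ x ^ j / j ! * f j := by
  refine ((Real.summable_pow_div_factorial |x|).mul_right C).of_norm_bounded fun j ↦ ?_
  rw [norm_mul, Real.norm_eq_abs, abs_div, abs_pow, Nat.abs_cast, Real.norm_eq_abs]
  gcongr
  exact hf j

lemma tsum_mul_poisson_eq_zero_iff (x : ℝ) (f : ℕ → ℝ) :
    ∑' j, f j * (Real.exp (-x) * x ^ j / j !) = 0 ↔ ∑' j, x ^ j / j ! * f j = 0 := by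
  have : (fun j ↦ f j * (Real.exp (-x) * x ^ j / j !)) =
      fun j ↦ Real.exp (-x) * (x ^ j / j ! * f j) := by
    funext j
    ring
  rw [this, tsum_mul_left, mul_eq_zero, or_iff_right (Real.exp_ne_zero _)]

lemma tsum_pow_div_factorial_mul_eq_zero_of_stein {x C : ℝ} {f g : ℕ → ℝ}
    (hf : Summable fun k ↦ x ^ k / k ! * f k) (hg : ∀ k, |g k| ≤ C)
    (heq : ∀ k : ℕ, x * g (k + 1) - k * g k = f k) :
    ∑' k, x ^ k / k ! * f k = 0 := by
  set v : ℕ → ℝ := fun n ↦ x ^ n / n ! * (n * g n)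
  have hstep : ∀ k, x ^ k / k ! * f k = v (k + 1) - v k := by
    intro k
    simp only [v, ← heq k, Nat.factorial_succ, pow_succ]
    push_cast
    field_simp
  have hv : Tendsto v atTop (𝓝 0) := by
    rw [← tendsto_add_atTop_iff_nat 1]
    have hbdd : IsBoundedUnder (· ≤ ·) atTop (fun n ↦ ‖x * g (n + 1)‖) :=
      isBoundedUnder_of ⟨|x| * C, fun n ↦ by
        rw [norm_mul, Real.norm_eq_abs, Real.norm_eq_abs]
        gcongr
        exact hg _⟩
    convert (FloorSemiring.tendsto_pow_div_factorial_atTop x).zero_mul_isBoundedUnder_le hbdd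
      using 2 with n
    simp only [v, Nat.factorial_succ, pow_succ]
    push_cast
    field_simp
  have hpartial : ∀ n, ∑ k ∈ range n, x ^ k / k ! * f k = v n := fun n ↦ by
    rw [sum_congr rfl fun k _ ↦ hstep k, sum_range_sub]
    simp [v]
  exact (hf.hasSum_iff_tendsto_nat.2 (by simpa only [hpartial] using hv)).tsum_eq

lemma steinSol_stein_eq {x : ℝ} (hx : x ≠ 0) (f : ℕ → ℝ) (k : ℕ) :
    x * steinSol x f (k + 1) - k * steinSol x f k = f k := by
  cases k with
  | zero => simp [steinSol, hx]
  | succ k =>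
    rw [steinSol, steinSol, sum_range_succ, Nat.factorial_succ]
    push_cast
    field_simp
    ring

lemma abs_tsum_pow_add_div_factorial_mul_le {x M : ℝ} (hx : 0 ≤ x) {f : ℕ → ℝ}
    (hM : ∀ k, |f k| ≤ M) (n : ℕ) :
    |∑' i, x ^ (i + n) / (i + n)! * f (i + n)| ≤ x ^ n / n ! * M * Real.exp x := by
  rw [← Real.norm_eq_abs]
  refine tsum_of_norm_bounded ((Real.hasSum_pow_div_factorial x).mul_left (x ^ n / n ! * M))
    fun i ↦ ?_
  rw [Real.norm_eq_abs, abs_mul, abs_of_nonneg (by positivity)]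
  calc x ^ (i + n) / (i + n)! * |f (i + n)| ≤ x ^ n / n ! * (x ^ i / i !) * M := by
        gcongr
        exacts [pow_add_div_factorial_le hx i n, hM _]
    _ = x ^ n / n ! * M * (x ^ i / i !) := by ring

lemma abs_steinSol_le {x M : ℝ} (hx : 0 < x) {f : ℕ → ℝ} (hM : ∀ k, |f k| ≤ M)
    (h0 : ∑' j, x ^ j / j ! * f j = 0) (k : ℕ) :
    |steinSol x f k| ≤ Real.exp x * M := by
  have hM0 : 0 ≤ M := (abs_nonneg _).trans (hM 0)
  cases k with
  | zero => simpa [steinSol] using by positivity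
  | succ k =>
    have htail : ∑ j ∈ range (k + 1), x ^ j / j ! * f j
        = -∑' i, x ^ (i + (k + 1)) / (i + (k + 1))! * f (i + (k + 1)) := by
      rw [eq_neg_iff_add_eq_zero, (summable_pow_div_factorial_mul hM x).sum_add_tsum_nat_add, h0]
    calc |steinSol x f (k + 1)|
        = k ! / x ^ (k + 1) * |∑' i, x ^ (i + (k + 1)) / (i + (k + 1))! * f (i + (k + 1))| := by
          rw [steinSol, htail, abs_mul, abs_neg, abs_of_pos (by positivity)]
      _ ≤ k ! / x ^ (k + 1) * (x ^ (k + 1) / (k + 1)! * M * Real.exp x) := by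
          gcongr
          exact abs_tsum_pow_add_div_factorial_mul_le hx.le hM _
      _ = Real.exp x * M / (k + 1) := by
          rw [Nat.factorial_succ]
          push_cast
          field_simp
      _ ≤ Real.exp x * M := div_le_self (by positivity) (by linarith [k.cast_nonneg (α := ℝ)])

/-- **Chen (1975).** Let `λ > 0` and `f : ℕ → ℝ` be bounded. Then the following are
equivalent: (i) there is a bounded `g : ℕ → ℝ` with `λ g(k+1) − k g(k) = f(k)` for all `k`;
(ii) `∑_{j≥0} f(j) e^{−λ} λ^j / j! = 0`.  Moreover, if these hold then the explicit function
`steinSol` solves the equation in (i) and satisfies `sup_k |g(k)| ≤ e^λ sup_k |f(k)|`. -/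
theorem chen_1975 (l : ℝ) (hl : 0 < l) (f : ℕ → ℝ) (hf : ∃ C, ∀ k, |f k| ≤ C) :
    ((∃ g : ℕ → ℝ, (∃ C, ∀ k, |g k| ≤ C) ∧
        ∀ k : ℕ, l * g (k + 1) - (k : ℝ) * g k = f k) ↔
      (∑' j : ℕ, f j * (Real.exp (-l) * l ^ j / (Nat.factorial j : ℝ))) = 0) ∧
    ((∑' j : ℕ, f j * (Real.exp (-l) * l ^ j / (Nat.factorial j : ℝ))) = 0 →
      (∀ k : ℕ, l * steinSol l f (k + 1) - (k : ℝ) * steinSol l f k = f k) ∧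
      (⨆ k : ℕ, |steinSol l f k|) ≤ Real.exp l * ⨆ k : ℕ, |f k|) := by
  obtain ⟨C, hC⟩ := hf
  have hsol := steinSol_stein_eq hl.ne' f
  have hsup : ∀ k, |f k| ≤ ⨆ k, |f k| :=
    le_ciSup ⟨C, by rintro _ ⟨k, rfl⟩; exact hC k⟩
  rw [tsum_mul_poisson_eq_zero_iff]
  refine ⟨⟨fun ⟨g, ⟨Cg, hg⟩, heq⟩ ↦ ?_, fun h0 ↦ ?_⟩, fun h0 ↦ ?_⟩
  · exact tsum_pow_div_factorial_mul_eq_zero_of_stein (summable_pow_div_factorial_mul hC l) hg heq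
  · exact ⟨steinSol l f, ⟨_, abs_steinSol_le hl hC h0⟩, hsol⟩
  · exact ⟨hsol, ciSup_le (abs_steinSol_le hl hsup h0)⟩
end

section
/- (Stein characterization of the Poisson distribution) Let λ > 0 and let Z be a random variable on a probability space taking values in ℕ. Then the law of Z is Poi(λ) if and only if, for every bounded function g : ℕ → ℝ, the random variable λ·g(Z+1) − Z·g(Z) is integrable and E[λ·g(Z+1) − Z·g(Z)] = 0. -/
open MeasureTheory ProbabilityTheory

noncomputable def poissonMeasure (l : ℝ) : Measure ℕ :=
  Measure.sum fun k =>
    ENNReal.ofReal (Real.exp (-l) * l ^ k / (Nat.factorial k : ℝ)) • Measure.dirac k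

/-!
For `Z ~ Poi(λ)` the weights `p n = e^{-λ} λ^n / n!` satisfy `p (n + 1) * (n + 1) = λ * p n`,
so shifting the summation index gives `E[Z g(Z)] = λ E[g(Z + 1)]` for every bounded `g`; `Z` is
integrable since its mean is `λ`. Conversely, testing the identity with `g = 1_{n+1}` yields
`(n + 1) P(Z = n + 1) = λ P(Z = n)`, so the law of `Z` is a multiple of `Poi(λ)`, hence equal
to it.
-/

open scoped NNReal Nat

theorem integrable_of_abs_le {α : Type*} [MeasurableSpace α] [DiscreteMeasurableSpace α]
    [Countable α] {μ : Measure α} [IsFiniteMeasure μ] {g : α → ℝ} {C : ℝ}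
    (hC : ∀ k, |g k| ≤ C) : Integrable g μ :=
  .of_bound .of_discrete C (ae_of_all _ hC)

theorem poissonMeasure_coe (r : ℝ≥0) : _root_.poissonMeasure r = Po(r) := rfl

theorem poissonMeasure_real_singleton_succ (r : ℝ≥0) (n : ℕ) :
    Po(r).real {n + 1} * (n + 1) = r * Po(r).real {n} := by
  simp only [poissonMeasure_real_singleton, Nat.factorial_succ, Nat.cast_mul, pow_succ]
  field_simp
  push_cast
  ring

theorem integrable_natCast_poissonMeasure (r : ℝ≥0) :
    Integrable (fun n : ℕ ↦ (n : ℝ)) Po(r) := by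
  rw [integrable_poissonMeasure_iff, ← summable_nat_add_iff 1]
  simp only [← poissonMeasure_real_singleton, Real.norm_natCast]
  simp only [Nat.cast_succ, poissonMeasure_real_singleton_succ]
  refine Summable.mul_left (r : ℝ) ?_
  simpa only [poissonMeasure_real_singleton] using (hasSum_one_poissonMeasure r).summable

theorem integral_natCast_mul_poissonMeasure (r : ℝ≥0) (g : ℕ → ℝ) :
    ∫ n, n * g n ∂Po(r) = r * ∫ n, g (n + 1) ∂Po(r) := by
  simp_rw [integral_poissonMeasure, ← poissonMeasure_real_singleton, smul_eq_mul]
  rw [← Nat.succ_injective.tsum_eq, ← tsum_mul_left]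
  · refine tsum_congr fun n ↦ ?_
    rw [Nat.succ_eq_add_one, Nat.cast_succ, ← mul_assoc, poissonMeasure_real_singleton_succ,
      mul_assoc]
  · rintro (_ | n) h
    · simp at h
    · exact ⟨n, rfl⟩

def poissonSteinOperator (l : ℝ) (g : ℕ → ℝ) (n : ℕ) : ℝ := l * g (n + 1) - n * g n

theorem integrable_natCast_mul_poissonMeasure (r : ℝ≥0) {g : ℕ → ℝ} {C : ℝ}
    (hC : ∀ k, |g k| ≤ C) : Integrable (fun n : ℕ ↦ n * g n) Po(r) :=
  (integrable_natCast_poissonMeasure r).mul_bdd .of_discrete (ae_of_all _ hC)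

theorem integrable_poissonSteinOperator_poissonMeasure (r : ℝ≥0) {g : ℕ → ℝ} {C : ℝ}
    (hC : ∀ k, |g k| ≤ C) : Integrable (poissonSteinOperator r g) Po(r) :=
  ((integrable_of_abs_le fun n ↦ hC (n + 1)).const_mul (r : ℝ)).sub
    (integrable_natCast_mul_poissonMeasure r hC)

theorem integral_poissonSteinOperator_poissonMeasure (r : ℝ≥0) {g : ℕ → ℝ} {C : ℝ}
    (hC : ∀ k, |g k| ≤ C) : ∫ n, poissonSteinOperator r g n ∂Po(r) = 0 := by
  simp only [poissonSteinOperator]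
  rw [integral_sub ((integrable_of_abs_le fun n ↦ hC (n + 1)).const_mul (r : ℝ))
    (integrable_natCast_mul_poissonMeasure r hC), integral_const_mul,
    integral_natCast_mul_poissonMeasure, sub_self]

theorem integral_poissonSteinOperator_indicator (μ : Measure ℕ) [IsFiniteMeasure μ] (l : ℝ)
    (n : ℕ) : ∫ k, poissonSteinOperator l (({n + 1} : Set ℕ).indicator 1) k ∂μ =
      l * μ.real {n} - (n + 1) * μ.real {n + 1} := by
  have hpointwise : poissonSteinOperator l (({n + 1} : Set ℕ).indicator 1) = fun k ↦
      l * ({n} : Set ℕ).indicator 1 k - (n + 1) * ({n + 1} : Set ℕ).indicator 1 k := by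
    ext k
    by_cases hk : k = n + 1 <;> simp [poissonSteinOperator, Set.indicator_apply, hk]
  have hint (m : ℕ) : Integrable (({m} : Set ℕ).indicator (1 : ℕ → ℝ)) μ :=
    (integrable_const 1).indicator (measurableSet_singleton m)
  rw [hpointwise, integral_sub ((hint n).const_mul l) ((hint (n + 1)).const_mul _),
    integral_const_mul, integral_const_mul, integral_indicator_one (measurableSet_singleton _),
    integral_indicator_one (measurableSet_singleton _)]

theorem eq_mul_pow_div_factorial_of_succ_mul_eq {q : ℕ → ℝ} {l : ℝ}
    (h : ∀ n, q (n + 1) * (n + 1) = l * q n) (n : ℕ) : q n = q 0 * (l ^ n / n !) := by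
  induction n with
  | zero => simp
  | succ n ih =>
    rw [eq_div_of_mul_eq (by positivity) (h n), ih, Nat.factorial_succ, Nat.cast_mul, pow_succ]
    field_simp
    push_cast
    ring

theorem eq_poissonMeasure_of_measureReal_singleton_succ {μ : Measure ℕ} [IsProbabilityMeasure μ]
    {r : ℝ≥0} (h : ∀ n, μ.real {n + 1} * (n + 1) = r * μ.real {n}) : μ = Po(r) := by
  -- The recursion determines μ up to a scalar multiple of Po(r), and total mass one fixes it.
  have hq := eq_mul_pow_div_factorial_of_succ_mul_eq (q := fun n ↦ μ.real {n}) h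
  have hμ : μ = ENNReal.ofReal (μ.real {0} * Real.exp r) • Po(r) := by
    refine Measure.ext_iff_singleton.mpr fun n ↦ ?_
    rw [Measure.smul_apply, poissonMeasure_singleton, smul_eq_mul,
      ← ENNReal.ofReal_mul (by positivity), ← ofReal_measureReal, hq n]
    congr 1
    rw [Real.exp_neg]
    field_simp
  have hc : ENNReal.ofReal (μ.real {0} * Real.exp r) = 1 := by
    simpa using (congrArg (fun ν : Measure ℕ ↦ ν Set.univ) hμ).symm
  rw [hμ, hc, one_smul]

theorem eq_poissonMeasure_iff_poissonSteinOperator (μ : Measure ℕ) [IsProbabilityMeasure μ]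
    (r : ℝ≥0) : μ = Po(r) ↔ ∀ g : ℕ → ℝ, (∃ C, ∀ k, |g k| ≤ C) →
      Integrable (poissonSteinOperator r g) μ ∧ ∫ n, poissonSteinOperator r g n ∂μ = 0 := by
  refine ⟨?_, fun H ↦ eq_poissonMeasure_of_measureReal_singleton_succ fun n ↦ ?_⟩
  · rintro rfl g ⟨C, hC⟩
    exact ⟨integrable_poissonSteinOperator_poissonMeasure r hC,
      integral_poissonSteinOperator_poissonMeasure r hC⟩
  · have hbound : ∀ k, |({n + 1} : Set ℕ).indicator (1 : ℕ → ℝ) k| ≤ 1 := fun k ↦ by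
      by_cases hk : k = n + 1 <;> simp [hk]
    have := (H _ ⟨1, hbound⟩).2
    rw [integral_poissonSteinOperator_indicator] at this
    linarith

/-- **Stein characterization of the Poisson distribution.** Let `λ > 0` and `Z` be an
`ℕ`-valued random variable.  Then `L(Z) = Poi(λ)` if and only if, for every bounded
`g : ℕ → ℝ`, the random variable `λ g(Z+1) − Z g(Z)` is integrable with
`E[λ g(Z+1) − Z g(Z)] = 0`. -/
theorem stein_characterization_poisson {Ω : Type*} [MeasurableSpace Ω] (P : Measure Ω)
    [IsProbabilityMeasure P] (l : ℝ) (hl : 0 < l) (Z : Ω → ℕ) (hZ : Measurable Z) :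
    Measure.map Z P = poissonMeasure l ↔
      ∀ g : ℕ → ℝ, (∃ C, ∀ k, |g k| ≤ C) →
        Integrable (fun ω => l * g (Z ω + 1) - (Z ω : ℝ) * g (Z ω)) P ∧
        ∫ ω, (l * g (Z ω + 1) - (Z ω : ℝ) * g (Z ω)) ∂P = 0 := by
  lift l to ℝ≥0 using hl.le
  have := Measure.isProbabilityMeasure_map (μ := P) hZ.aemeasurable
  rw [poissonMeasure_coe, eq_poissonMeasure_iff_poissonSteinOperator]
  refine forall₂_congr fun g _ ↦ and_congr ?_ ?_
  · exact integrable_map_measure .of_discrete hZ.aemeasurable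
  · rw [integral_map hZ.aemeasurable .of_discrete]
    rfl
end

section
/- (Le Cam, 1960) Let I_1, …, I_n be independent Bernoulli random variables with P(I_i = 1) = p_i and P(I_i = 0) = 1 − p_i, where 0 < p_i < 1 for each i. Let W = ∑_{i=1}^n I_i and λ = E W = ∑_{i=1}^n p_i. Then d_TV(L(W), Poi(λ)) ≤ ∑_{i=1}^n p_i². -/
open MeasureTheory ProbabilityTheory

/-- Total variation distance between two measures on `ℕ`:
`d_TV(μ, ν) = sup_{A ⊆ ℕ} |μ(A) − ν(A)|`. -/
noncomputable def tvDist (μ ν : Measure ℕ) : ℝ :=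
  ⨆ A : Set ℕ, |(μ A).toReal - (ν A).toReal|

/-!
The law of `W` is the convolution of the laws of the `Iᵢ`, and `Poi(λ)` is the convolution of the
`Poi(pᵢ)`. Convolving with a probability measure can only shrink total variation distance
(`(μ ∗ ν)(A) = ∫ ν(A - x) dμ(x)`), so by the triangle inequality `d_TV` is subadditive over
convolutions and the bound reduces to a single summand: a law `μ` with `μ{0} = 1 - q`,
`μ{1} = q` differs from `Poi(q)` in total variation by `q (1 - e^{-q}) ≤ q²`.
-/

open scoped NNReal ENNReal

section TotalVariation

variable {μ ν ρ : Measure ℕ}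

lemma abs_measureReal_sub_le_tvDist [IsFiniteMeasure μ] [IsFiniteMeasure ν] (A : Set ℕ) :
    |μ.real A - ν.real A| ≤ tvDist μ ν := by
  refine le_ciSup (f := fun A : Set ℕ => |μ.real A - ν.real A|)
    ⟨μ.real .univ + ν.real .univ, ?_⟩ A
  rintro _ ⟨B, rfl⟩
  have hμ := measureReal_mono (μ := μ) (Set.subset_univ B)
  have hν := measureReal_mono (μ := ν) (Set.subset_univ B)
  exact abs_sub_le_iff.mpr ⟨by linarith [measureReal_nonneg (μ := ν) (s := B)],
    by linarith [measureReal_nonneg (μ := μ) (s := B)]⟩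

lemma tvDist_le_iff [IsFiniteMeasure μ] [IsFiniteMeasure ν] {c : ℝ} :
    tvDist μ ν ≤ c ↔ ∀ A, |μ.real A - ν.real A| ≤ c :=
  ⟨fun h A => (abs_measureReal_sub_le_tvDist A).trans h, ciSup_le⟩

lemma tvDist_self : tvDist μ μ = 0 := by
  simp [tvDist]

lemma tvDist_triangle [IsFiniteMeasure μ] [IsFiniteMeasure ν] [IsFiniteMeasure ρ] :
    tvDist μ ρ ≤ tvDist μ ν + tvDist ν ρ :=
  tvDist_le_iff.mpr fun A => (abs_sub_le _ (ν.real A) _).trans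
    (add_le_add (abs_measureReal_sub_le_tvDist A) (abs_measureReal_sub_le_tvDist A))

lemma tvDist_le_of_measure_le_add [IsProbabilityMeasure μ] [IsProbabilityMeasure ν] {c : ℝ≥0}
    (h : ∀ A, μ A ≤ ν A + c) : tvDist μ ν ≤ c := by
  have hreal : ∀ A, μ.real A - ν.real A ≤ c := fun A => by
    have := ENNReal.toReal_mono (by finiteness) (h A)
    rw [ENNReal.toReal_add (measure_ne_top ν A) ENNReal.coe_ne_top,
      ENNReal.coe_toReal] at this
    simp only [measureReal_def]
    linarith
  refine tvDist_le_iff.mpr fun A => abs_sub_le_iff.mpr ⟨hreal A, ?_⟩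
  have := hreal Aᶜ
  rw [measureReal_compl .of_discrete, measureReal_compl .of_discrete] at this
  simp only [probReal_univ] at this
  linarith

end TotalVariation

section Convolution

variable {μ μ' ν ν' : Measure ℕ}

lemma measureReal_conv_eq_integral [IsFiniteMeasure μ] [IsFiniteMeasure ν] (A : Set ℕ) :
    (μ ∗ ν).real A = ∫ x, ν.real ((x + ·) ⁻¹' A) ∂μ := by
  rw [measureReal_def, Measure.conv, Measure.map_apply measurable_add (.of_discrete),
    Measure.prod_apply (measurable_add (.of_discrete)), ← integral_toReal (.of_discrete)
    (ae_of_all _ fun x => measure_lt_top _ _)]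
  rfl

lemma integrable_measureReal_preimage [IsFiniteMeasure μ] [IsFiniteMeasure ν] (A : Set ℕ) :
    Integrable (fun x => ν.real ((x + ·) ⁻¹' A)) μ :=
  .of_bound .of_discrete (ν.real .univ) (ae_of_all _ fun x => by
    rw [Real.norm_of_nonneg measureReal_nonneg]
    exact measureReal_mono (Set.subset_univ _))

lemma tvDist_conv_left_le [IsProbabilityMeasure μ] [IsFiniteMeasure ν] [IsFiniteMeasure ν'] :
    tvDist (μ ∗ ν) (μ ∗ ν') ≤ tvDist ν ν' := by
  refine tvDist_le_iff.mpr fun A => ?_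
  rw [measureReal_conv_eq_integral, measureReal_conv_eq_integral,
    ← integral_sub (integrable_measureReal_preimage A) (integrable_measureReal_preimage A)]
  simpa using norm_integral_le_of_norm_le_const (μ := μ)
    (f := fun x => ν.real ((x + ·) ⁻¹' A) - ν'.real ((x + ·) ⁻¹' A))
    (ae_of_all _ fun x => abs_measureReal_sub_le_tvDist _)

lemma tvDist_conv_conv_le [IsProbabilityMeasure μ] [IsProbabilityMeasure μ']
    [IsProbabilityMeasure ν] [IsProbabilityMeasure ν'] :
    tvDist (μ ∗ ν) (μ' ∗ ν') ≤ tvDist μ μ' + tvDist ν ν' :=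
  calc tvDist (μ ∗ ν) (μ' ∗ ν')
      ≤ tvDist (μ ∗ ν) (μ ∗ ν') + tvDist (ν' ∗ μ) (ν' ∗ μ') := by
        rw [Measure.conv_comm ν' μ, Measure.conv_comm ν' μ']
        exact tvDist_triangle
    _ ≤ tvDist μ μ' + tvDist ν ν' := by
        rw [add_comm]
        exact add_le_add tvDist_conv_left_le tvDist_conv_left_le

end Convolution

lemma ProbabilityTheory.poissonMeasure_zero : Po(0) = Measure.dirac 0 := by
  refine Measure.ext_iff_singleton.mpr fun n => ?_
  rw [poissonMeasure_singleton]
  rcases n with _ | n <;> simp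

lemma poissonMeasure_eq_poissonMeasure_toNNReal {l : ℝ} (hl : 0 ≤ l) :
    poissonMeasure l = Po(l.toNNReal) := by
  simp only [_root_.poissonMeasure, ProbabilityTheory.poissonMeasure, Real.coe_toNNReal _ hl]

lemma tvDist_map_sum_poissonMeasure_le {Ω ι : Type*} [MeasurableSpace Ω] {P : Measure Ω}
    [IsProbabilityMeasure P] {X : ι → Ω → ℕ} (hX : ∀ i, Measurable (X i))
    (hindep : iIndepFun X P) (r : ι → ℝ≥0) (s : Finset ι) :
    tvDist (P.map fun ω => ∑ i ∈ s, X i ω) Po(∑ i ∈ s, r i) ≤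
      ∑ i ∈ s, tvDist (P.map (X i)) Po(r i) := by
  classical
  induction s using Finset.induction_on with
  | empty => simp [poissonMeasure_zero, tvDist_self]
  | insert j s hj ih =>
    have hsum : (fun ω => ∑ i ∈ insert j s, X i ω) = X j + fun ω => ∑ i ∈ s, X i ω := by
      ext ω; simp [Finset.sum_insert hj]
    have hindep_j : IndepFun (X j) (fun ω => ∑ i ∈ s, X i ω) P := by
      simpa only [Finset.sum_fn] using (hindep.indepFun_finsetSum_of_notMem hX hj).symm
    have hmeas_s : Measurable fun ω => ∑ i ∈ s, X i ω := Finset.measurable_sum s fun i _ => hX i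
    have : IsProbabilityMeasure (P.map fun ω => ∑ i ∈ s, X i ω) :=
      Measure.isProbabilityMeasure_map hmeas_s.aemeasurable
    have : IsProbabilityMeasure (P.map (X j)) :=
      Measure.isProbabilityMeasure_map (hX j).aemeasurable
    rw [hsum, hindep_j.map_add_eq_map_conv_map (hX j) hmeas_s, Finset.sum_insert hj,
      Finset.sum_insert hj, ← poissonMeasure_conv_poissonMeasure]
    exact tvDist_conv_conv_le.trans (add_le_add_right ih _)

lemma measure_le_add_tsum_of_forall_singleton_le {α : Type*} [MeasurableSpace α] [Countable α]
    [MeasurableSingletonClass α] {μ ν : Measure α} {c : α → ℝ≥0∞}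
    (h : ∀ a, μ {a} ≤ ν {a} + c a) (s : Set α) : μ s ≤ ν s + ∑' a, c a := by
  rw [← Measure.tsum_indicator_apply_singleton μ s s.to_countable.measurableSet,
    ← Measure.tsum_indicator_apply_singleton ν s s.to_countable.measurableSet, ← ENNReal.tsum_add]
  refine ENNReal.tsum_le_tsum fun a => ?_
  by_cases ha : a ∈ s
  · simpa [ha] using h a
  · simp [ha]

lemma tvDist_poissonMeasure_le_sq {μ : Measure ℕ} [IsProbabilityMeasure μ] {q : ℝ≥0}
    (h0 : μ {0} = ENNReal.ofReal (1 - q)) (h1 : μ {1} = q) :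
    tvDist μ Po(q) ≤ q ^ 2 := by
  have hsupp : μ {0, 1}ᶜ = 0 := by
    refine (prob_compl_eq_zero_iff .of_discrete).mpr (le_antisymm prob_le_one ?_)
    calc (1 : ℝ≥0∞) = ENNReal.ofReal ((1 - q) + q) := by simp
      _ ≤ μ {0} + μ {1} := by
        rw [h0, h1, ← ENNReal.ofReal_coe_nnreal]
        exact ENNReal.ofReal_add_le
      _ = μ {0, 1} := (measure_union (by simp) (measurableSet_singleton 1)).symm
  -- `μ` exceeds `Po(q)` only at `1`, and there by q (1 - e^{-q}) ≤ q².
  suffices h : ∀ A, μ A ≤ Po(q) A + ↑(q ^ 2) by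
    simpa using tvDist_le_of_measure_le_add h
  refine fun A => (measure_le_add_tsum_of_forall_singleton_le (ν := Po(q))
    (c := fun k => if k = 1 then ↑(q ^ 2) else 0) (fun k => ?_) A).trans_eq (by simp)
  rw [poissonMeasure_singleton]
  match k with
  | 0 =>
    rw [h0]
    simp only [pow_zero, Nat.factorial_zero, Nat.cast_one, mul_one, div_one, zero_ne_one,
      if_false, add_zero]
    exact ENNReal.ofReal_le_ofReal (Real.one_sub_le_exp_neg q)
  | 1 =>
    rw [h1]
    simp only [pow_one, Nat.factorial_one, Nat.cast_one, div_one, if_true]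
    rw [← ENNReal.ofReal_coe_nnreal, ← ENNReal.ofReal_coe_nnreal (p := q ^ 2),
      ← ENNReal.ofReal_add (by positivity) (by positivity)]
    refine ENNReal.ofReal_le_ofReal ?_
    push_cast
    nlinarith [Real.one_sub_le_exp_neg (q : ℝ), q.coe_nonneg]
  | k + 2 =>
    rw [measure_mono_null (by simp) hsupp]
    exact bot_le

/-- **Le Cam (1960).** If `I₁, …, Iₙ` are independent Bernoulli random variables with
`P(Iᵢ = 1) = pᵢ` and `P(Iᵢ = 0) = 1 - pᵢ`, `0 < pᵢ < 1`, `W = ∑ᵢ Iᵢ` and `λ = ∑ᵢ pᵢ`, then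
`d_TV(L(W), Poi(λ)) ≤ ∑ᵢ pᵢ²`. -/
theorem le_cam {Ω : Type*} [MeasurableSpace Ω] (P : Measure Ω) [IsProbabilityMeasure P]
    (n : ℕ) (I : Fin n → Ω → ℕ) (p : Fin n → ℝ)
    (hmeas : ∀ i, Measurable (I i))
    (hp : ∀ i, 0 < p i ∧ p i < 1)
    (h1 : ∀ i, P {ω | I i ω = 1} = ENNReal.ofReal (p i))
    (h0 : ∀ i, P {ω | I i ω = 0} = ENNReal.ofReal (1 - p i))
    (hindep : iIndepFun I P) :
    tvDist (Measure.map (fun ω => ∑ i, I i ω) P) (poissonMeasure (∑ i, p i)) ≤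
      ∑ i, (p i) ^ 2 := by
  have hp_coe : ∀ i, ((p i).toNNReal : ℝ) = p i := fun i => Real.coe_toNNReal _ (hp i).1.le
  have hpoisson : poissonMeasure (∑ i, p i) = Po(∑ i, (p i).toNNReal) := by
    rw [poissonMeasure_eq_poissonMeasure_toNNReal (Finset.sum_nonneg fun i _ => (hp i).1.le),
      Real.toNNReal_sum_of_nonneg fun i _ => (hp i).1.le]
  have hbernoulli : ∀ i, tvDist (P.map (I i)) Po((p i).toNNReal) ≤ p i ^ 2 := fun i => by
    have : IsProbabilityMeasure (P.map (I i)) :=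
      Measure.isProbabilityMeasure_map (hmeas i).aemeasurable
    refine (tvDist_poissonMeasure_le_sq (μ := P.map (I i)) ?_ ?_).trans_eq (by rw [hp_coe])
    · rw [Measure.map_apply (hmeas i) (measurableSet_singleton 0), hp_coe]
      exact h0 i
    · rw [Measure.map_apply (hmeas i) (measurableSet_singleton 1)]
      exact h1 i
  rw [hpoisson]
  exact (tvDist_map_sum_poissonMeasure_le hmeas hindep _ _).trans
    (Finset.sum_le_sum fun i _ => hbernoulli i)
end

section
/- (Expected inverse of a binomial–Poisson mixture along an immigration–death trajectory) Let λ > 0 and k ∈ ℕ. Then ∫_0^∞ e^{−t} · [ ∑_{l=0}^{k} ∑_{m=0}^{∞} (l + m + 1)^{−1} · C(k,l) e^{−lt} (1 − e^{−t})^{k−l} · e^{−λ(1−e^{−t})} (λ(1−e^{−t}))^m / m! ] dt ≤ (1/λ + 1/(k+1)) · (1 − e^{−λ}). Equivalently, if for each t ≥ 0 the random variable Z_t = X_t + Y_t is the sum of independent X_t ∼ Binomial(k, e^{−t}) and Y_t ∼ Poisson(λ(1 − e^{−t})), then ∫_0^∞ e^{−t} E[(Z_t + 1)^{−1}] dt ≤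 (1/λ + 1/(k+1))(1 − e^{−λ}). -/
/-!
Fix `t > 0` and put `p = e^{-t}`, `μ = λ(1 - p)`. The function `x ↦ (x + c + 1)⁻¹` is convex,
so on `[0, k]` it lies below its chord, whose right end is at most `(k + 1)⁻¹`. Averaging over
`X ∼ Binomial(k, p)`, whose mean is `kp`, and over `Y ∼ Poisson(μ)`, for which
`E[(Y + 1)⁻¹] = (1 - e^{-μ}) / μ`, gives `E[(Z_t + 1)⁻¹] ≤ (1 - e^{-μ}) / λ + p / (k + 1)`.
After multiplying by `e^{-t}` this majorant has an explicit primitive, and its integral is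
`(e^{-λ} - 1) / λ² + 1 / λ + r / 2` with `r = 1 / (k + 1)`. The remaining inequality is affine in
`r ∈ [0, 1]`; at `r = 0` and `r = 1` it reduces to `(1 + λ) e^{-λ} ≤ 1` and
`(1 + λ + λ²) e^{-λ} ≤ 1 + λ² / 2`.
-/

open MeasureTheory Real Finset Set Filter
open scoped Nat Topology

noncomputable def poissonWeight (μ : ℝ) (m : ℕ) : ℝ := exp (-μ) * μ ^ m / m !

lemma hasSum_poissonWeight (μ : ℝ) : HasSum (poissonWeight μ) 1 := by
  have h := (NormedSpace.expSeries_div_hasSum_exp (𝔸 := ℝ) μ).mul_left (exp (-μ))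
  rw [← Real.exp_eq_exp_ℝ, ← Real.exp_add, neg_add_cancel, Real.exp_zero] at h
  show HasSum (fun m : ℕ ↦ exp (-μ) * μ ^ m / m !) 1
  simpa only [mul_div_assoc] using h

lemma poissonWeight_nonneg {μ : ℝ} (hμ : 0 ≤ μ) (m : ℕ) : 0 ≤ poissonWeight μ m := by
  unfold poissonWeight; positivity

lemma poissonWeight_succ (μ : ℝ) (m : ℕ) :
    poissonWeight μ (m + 1) = μ / (m + 1) * poissonWeight μ m := by
  simp only [poissonWeight, Nat.factorial_succ, pow_succ]
  push_cast
  field_simp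

lemma hasSum_poissonWeight_div_succ {μ : ℝ} (hμ : μ ≠ 0) :
    HasSum (fun m : ℕ ↦ ((m : ℝ) + 1)⁻¹ * poissonWeight μ m) ((1 - exp (-μ)) / μ) := by
  have h := (hasSum_nat_add_iff' 1).mpr (hasSum_poissonWeight μ)
  have h0 : poissonWeight μ 0 = exp (-μ) := by simp [poissonWeight]
  rw [Finset.sum_range_one, h0] at h
  have hshift : (fun m : ℕ ↦ ((m : ℝ) + 1)⁻¹ * poissonWeight μ m) =
      fun m ↦ poissonWeight μ (m + 1) / μ := by
    ext m
    rw [poissonWeight_succ]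
    field_simp
  rw [hshift]
  exact h.div_const μ

lemma sum_choose_mul_pow_mul_one_sub_pow {R : Type*} [CommRing R] (k : ℕ) (p : R) :
    ∑ j ∈ range (k + 1), (k.choose j : R) * p ^ j * (1 - p) ^ (k - j) = 1 := by
  simpa [bernsteinPolynomial, Polynomial.eval_finsetSum] using
    congrArg (Polynomial.eval p) (bernsteinPolynomial.sum R k)

lemma sum_mul_choose_mul_pow_mul_one_sub_pow {R : Type*} [CommRing R] (k : ℕ) (p : R) :
    ∑ j ∈ range (k + 1), (j : R) * ((k.choose j : R) * p ^ j * (1 - p) ^ (k - j)) = k * p := by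
  simpa [bernsteinPolynomial, Polynomial.eval_finsetSum, nsmul_eq_mul] using
    congrArg (Polynomial.eval p) (bernsteinPolynomial.sum_smul R k)

/-- Chord bound for the convex function `x ↦ (x + c + 1)⁻¹` on `[0, b]`; for `b = 0` it holds
because `a / 0 = 0`. -/
lemma inv_add_add_one_le {a b c : ℝ} (ha : 0 ≤ a) (hab : a ≤ b) (hc : 0 ≤ c) :
    (a + c + 1)⁻¹ ≤ (1 - a / b) * (c + 1)⁻¹ + a / b * (b + 1)⁻¹ := by
  rcases (ha.trans hab).eq_or_lt with rfl | hb
  · obtain rfl : a = 0 := le_antisymm hab ha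
    simp
  have hchord : (a + c + 1)⁻¹ ≤ (1 - a / b) * (c + 1)⁻¹ + a / b * (b + c + 1)⁻¹ := by
    rw [inv_le_iff_one_le_mul₀ (by positivity)]
    field_simp
    nlinarith [mul_nonneg (mul_nonneg ha hc) (sub_nonneg.2 hab), mul_nonneg ha (sub_nonneg.2 hab)]
  calc _ ≤ _ := hchord
    _ ≤ _ := by gcongr; linarith

section Trajectory

variable {k : ℕ} {p μ : ℝ}

/-- `E[(X + Y + 1)⁻¹]` for independent `X ∼ Binomial(k, p)` and `Y ∼ Poisson(μ)`. -/
noncomputable def inverseMoment (k : ℕ) (p μ : ℝ) : ℝ :=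
  ∑ j ∈ range (k + 1), ∑' m : ℕ,
    ((j : ℝ) + m + 1)⁻¹ * (k.choose j : ℝ) * p ^ j * (1 - p) ^ (k - j) * poissonWeight μ m

lemma inverseMoment_nonneg (hp₀ : 0 ≤ p) (hp₁ : p ≤ 1) (hμ : 0 ≤ μ) : 0 ≤ inverseMoment k p μ :=
  sum_nonneg fun j _ ↦ tsum_nonneg fun m ↦ mul_nonneg (mul_nonneg (mul_nonneg (by positivity)
    (pow_nonneg hp₀ _)) (pow_nonneg (sub_nonneg.2 hp₁) _)) (poissonWeight_nonneg hμ m)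

lemma tsum_inv_add_succ_mul_poissonWeight_le {j : ℕ} (hjk : j ≤ k) (hμ : 0 < μ) :
    ∑' m : ℕ, ((j : ℝ) + m + 1)⁻¹ * poissonWeight μ m ≤
      (1 - j / k) * ((1 - exp (-μ)) / μ) + j / k * ((k : ℝ) + 1)⁻¹ := by
  have hsum : Summable fun m : ℕ ↦ ((j : ℝ) + m + 1)⁻¹ * poissonWeight μ m :=
    (hasSum_poissonWeight μ).summable.of_nonneg_of_le
      (fun m ↦ mul_nonneg (by positivity) (poissonWeight_nonneg hμ.le m))
      (fun m ↦ mul_le_of_le_one_left (poissonWeight_nonneg hμ.le m)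
        (inv_le_one_of_one_le₀ (by linarith [(j.cast_nonneg : (0 : ℝ) ≤ j),
          (m.cast_nonneg : (0 : ℝ) ≤ m)])))
  have hbound := ((hasSum_poissonWeight_div_succ hμ.ne').mul_left (1 - (j : ℝ) / k)).add
    ((hasSum_poissonWeight μ).mul_left (j / k * ((k : ℝ) + 1)⁻¹))
  rw [mul_one] at hbound
  refine hasSum_le (fun m ↦ ?_) hsum.hasSum hbound
  calc ((j : ℝ) + m + 1)⁻¹ * poissonWeight μ m
      ≤ ((1 - j / k) * ((m : ℝ) + 1)⁻¹ + j / k * ((k : ℝ) + 1)⁻¹) * poissonWeight μ m := by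
        gcongr
        · exact poissonWeight_nonneg hμ.le m
        · exact inv_add_add_one_le j.cast_nonneg (by exact_mod_cast hjk) m.cast_nonneg
    _ = _ := by ring

lemma one_sub_exp_neg_div_le_one (hμ : 0 < μ) : (1 - exp (-μ)) / μ ≤ 1 := by
  rw [div_le_one hμ]
  linarith [add_one_le_exp (-μ)]

lemma inverseMoment_le (hp₀ : 0 ≤ p) (hp₁ : p ≤ 1) (hμ : 0 < μ) :
    inverseMoment k p μ ≤ (1 - p) * ((1 - exp (-μ)) / μ) + p / (k + 1) := by
  set h := (1 - exp (-μ)) / μ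
  set w : ℕ → ℝ := fun j ↦ (k.choose j : ℝ) * p ^ j * (1 - p) ^ (k - j)
  have hw : ∀ j, 0 ≤ w j := fun j ↦
    mul_nonneg (mul_nonneg (by positivity) (pow_nonneg hp₀ _)) (pow_nonneg (sub_nonneg.2 hp₁) _)
  calc inverseMoment k p μ
      = ∑ j ∈ range (k + 1), w j * ∑' m : ℕ, ((j : ℝ) + m + 1)⁻¹ * poissonWeight μ m := by
        refine sum_congr rfl fun j _ ↦ ?_
        rw [← tsum_mul_left]
        exact tsum_congr fun m ↦ by ring
    _ ≤ ∑ j ∈ range (k + 1), w j * ((1 - j / k) * h + j / k * ((k : ℝ) + 1)⁻¹) := by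
        refine sum_le_sum fun j hj ↦ mul_le_mul_of_nonneg_left ?_ (hw j)
        exact tsum_inv_add_succ_mul_poissonWeight_le (Nat.lt_succ_iff.1 (mem_range.1 hj)) hμ
    _ = h * ∑ j ∈ range (k + 1), w j +
          (((k : ℝ) + 1)⁻¹ - h) / k * ∑ j ∈ range (k + 1), (j : ℝ) * w j := by
        rw [mul_sum, mul_sum, ← sum_add_distrib]
        exact sum_congr rfl fun j _ ↦ by ring
    _ = h + (((k : ℝ) + 1)⁻¹ - h) / k * (k * p) := by
        rw [sum_choose_mul_pow_mul_one_sub_pow, sum_mul_choose_mul_pow_mul_one_sub_pow, mul_one]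
    _ ≤ (1 - p) * h + p / (k + 1) := by
        rcases eq_or_ne k 0 with rfl | hk
        · simp only [CharP.cast_eq_zero, zero_add, inv_one, div_one, zero_mul, mul_zero, add_zero]
          nlinarith [one_sub_exp_neg_div_le_one hμ]
        · refine le_of_eq ?_
          field_simp
          ring

end Trajectory

section Majorant

variable {l r : ℝ}

/-- `e^{-t}` times the bound of `inverseMoment_le` at `p = e^{-t}`, `μ = l (1 - e^{-t})`, with `r`
standing for `1 / (k + 1)`. -/
noncomputable def majorant (l r t : ℝ) : ℝ :=
  exp (-t) * ((1 - exp (-(l * (1 - exp (-t))))) / l + r * exp (-t))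

noncomputable def majorantPrimitive (l r t : ℝ) : ℝ :=
  (exp (-(l * (1 - exp (-t)))) / l - exp (-t)) / l - r * exp (-t) ^ 2 / 2

lemma exp_neg_mul_inverseMoment_nonneg {k : ℕ} (hl : 0 ≤ l) {t : ℝ} (ht : 0 ≤ t) :
    0 ≤ exp (-t) * inverseMoment k (exp (-t)) (l * (1 - exp (-t))) := by
  have hp₁ : exp (-t) ≤ 1 := exp_le_one_iff.2 (by linarith)
  exact mul_nonneg (exp_pos _).le
    (inverseMoment_nonneg (exp_pos _).le hp₁ (mul_nonneg hl (sub_nonneg.2 hp₁)))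

lemma exp_neg_mul_inverseMoment_le_majorant {k : ℕ} (hl : 0 < l) {t : ℝ} (ht : 0 < t) :
    exp (-t) * inverseMoment k (exp (-t)) (l * (1 - exp (-t))) ≤ majorant l (1 / (k + 1)) t := by
  have hp₁ : exp (-t) < 1 := exp_lt_one_iff.2 (neg_neg_of_pos ht)
  have hμ : 0 < l * (1 - exp (-t)) := mul_pos hl (sub_pos.2 hp₁)
  refine (mul_le_mul_of_nonneg_left (inverseMoment_le (exp_pos _).le hp₁.le hμ)
    (exp_pos _).le).trans_eq ?_
  have : 1 - exp (-t) ≠ 0 := (sub_pos.2 hp₁).ne'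
  unfold majorant
  field_simp

lemma majorant_nonneg (hl : 0 < l) (hr : 0 ≤ r) {t : ℝ} (ht : 0 ≤ t) : 0 ≤ majorant l r t := by
  have hμ : 0 ≤ l * (1 - exp (-t)) :=
    mul_nonneg hl.le (sub_nonneg.2 (exp_le_one_iff.2 (by linarith)))
  have hexp : 0 ≤ 1 - exp (-(l * (1 - exp (-t)))) := sub_nonneg.2 (exp_le_one_iff.2 (by linarith))
  unfold majorant
  positivity

lemma hasDerivAt_majorantPrimitive (hl : l ≠ 0) (t : ℝ) :
    HasDerivAt (majorantPrimitive l r) (majorant l r t) t := by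
  have hexp : HasDerivAt (fun t ↦ exp (-t)) (-exp (-t)) t := by
    simpa using (hasDerivAt_neg t).exp
  have := (((((hexp.const_sub 1).const_mul l).neg.exp.div_const l).sub hexp).div_const l).sub
    ((hexp.pow 2).const_mul r |>.div_const 2)
  refine this.congr_deriv ?_
  simp only [majorant, Pi.neg_apply]
  field_simp
  ring

lemma tendsto_majorantPrimitive :
    Tendsto (majorantPrimitive l r) atTop (𝓝 (exp (-l) / l ^ 2)) := by
  have hexp : Tendsto (fun t ↦ exp (-t)) atTop (𝓝 0) := tendsto_exp_neg_atTop_nhds_zero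
  have := (((((hexp.const_sub 1).const_mul l).neg.rexp.div_const l).sub hexp).div_const l).sub
    ((hexp.pow 2).const_mul r |>.div_const 2)
  have hlim : (exp (-(l * (1 - 0))) / l - 0) / l - r * 0 ^ 2 / 2 = exp (-l) / l ^ 2 := by
    norm_num
    ring
  rwa [hlim] at this

lemma integrableOn_majorant (hl : 0 < l) (hr : 0 ≤ r) : IntegrableOn (majorant l r) (Ioi 0) :=
  integrableOn_Ioi_deriv_of_nonneg' (fun t _ ↦ hasDerivAt_majorantPrimitive hl.ne' t)
    (fun _ ht ↦ majorant_nonneg hl hr (le_of_lt ht)) tendsto_majorantPrimitive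

lemma integral_majorant (hl : 0 < l) (hr : 0 ≤ r) :
    ∫ t in Ioi 0, majorant l r t = (exp (-l) - 1) / l ^ 2 + 1 / l + r / 2 := by
  rw [integral_Ioi_of_hasDerivAt_of_nonneg' (fun t _ ↦ hasDerivAt_majorantPrimitive hl.ne' t)
    (fun _ ht ↦ majorant_nonneg hl hr (le_of_lt ht)) tendsto_majorantPrimitive]
  simp only [majorantPrimitive, neg_zero, exp_zero, sub_self, mul_zero]
  field_simp
  ring

end Majorant

lemma one_add_mul_exp_neg_le_one (x : ℝ) : (1 + x) * exp (-x) ≤ 1 := by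
  rw [← le_div_iff₀ (exp_pos _), exp_neg, div_inv_eq_mul, one_mul, add_comm]
  exact add_one_le_exp x

lemma one_add_add_sq_mul_exp_neg_le {x : ℝ} (hx : 0 ≤ x) :
    (1 + x + x ^ 2) * exp (-x) ≤ 1 + x ^ 2 / 2 := by
  rw [← le_div_iff₀ (exp_pos _), exp_neg, div_inv_eq_mul]
  nlinarith [quadratic_le_exp_of_nonneg hx, pow_nonneg hx 3, pow_nonneg hx 4]

lemma sub_one_div_sq_add_le {l r : ℝ} (hl : 0 < l) (hr₀ : 0 ≤ r) (hr₁ : r ≤ 1) :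
    (exp (-l) - 1) / l ^ 2 + 1 / l + r / 2 ≤ (1 / l + r) * (1 - exp (-l)) := by
  have h₀ := one_add_mul_exp_neg_le_one l
  have h₁ := one_add_add_sq_mul_exp_neg_le hl.le
  rw [← sub_nonneg]
  have key : (1 / l + r) * (1 - exp (-l)) - ((exp (-l) - 1) / l ^ 2 + 1 / l + r / 2) =
      ((1 - r) * (1 - (1 + l) * exp (-l)) +
        r * (1 + l ^ 2 / 2 - (1 + l + l ^ 2) * exp (-l))) / l ^ 2 := by
    field_simp
    ring
  rw [key]
  apply div_nonneg _ (by positivity)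
  nlinarith [mul_nonneg (sub_nonneg.2 hr₁) (sub_nonneg.2 h₀), mul_nonneg hr₀ (sub_nonneg.2 h₁)]

/-- **Expected inverse of a binomial–Poisson mixture along an immigration–death trajectory.**
For `λ > 0` and `k ∈ ℕ`, if for each `t ≥ 0` the random variable `Z_t = X_t + Y_t` is a sum
of independent `X_t ∼ Binomial(k, e^{−t})` and `Y_t ∼ Poisson(λ(1 − e^{−t}))`, then
`∫_0^∞ e^{−t} E[(Z_t + 1)^{−1}] dt ≤ (1/λ + 1/(k+1)) (1 − e^{−λ})`, where
`E[(Z_t + 1)^{−1}]` is written out as the explicit binomial–Poisson convolution sum. -/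
theorem immigration_death_inverse_moment_bound (l : ℝ) (hl : 0 < l) (k : ℕ) :
    (∫ t in Set.Ioi (0 : ℝ), Real.exp (-t) *
        ∑ j ∈ Finset.range (k + 1), ∑' m : ℕ,
          ((j : ℝ) + m + 1)⁻¹ * (Nat.choose k j : ℝ) * Real.exp (-t) ^ j *
            (1 - Real.exp (-t)) ^ (k - j) *
            (Real.exp (-(l * (1 - Real.exp (-t)))) * (l * (1 - Real.exp (-t))) ^ m /
              (Nat.factorial m : ℝ)))
      ≤ (1 / l + 1 / (k + 1)) * (1 - Real.exp (-l)) := by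
  have hr₀ : (0 : ℝ) ≤ 1 / (k + 1) := by positivity
  have hr₁ : 1 / ((k : ℝ) + 1) ≤ 1 := by
    rw [div_le_one (by positivity)]; linarith [(k.cast_nonneg : (0 : ℝ) ≤ k)]
  calc ∫ t in Ioi 0, exp (-t) * inverseMoment k (exp (-t)) (l * (1 - exp (-t)))
      ≤ ∫ t in Ioi 0, majorant l (1 / (k + 1)) t := by
        refine integral_mono_of_nonneg ?_ (integrableOn_majorant hl hr₀) ?_
        · filter_upwards [ae_restrict_mem measurableSet_Ioi] with t ht
          exact exp_neg_mul_inverseMoment_nonneg hl.le (le_of_lt ht)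
        · filter_upwards [ae_restrict_mem measurableSet_Ioi] with t ht
          exact exp_neg_mul_inverseMoment_le_majorant hl ht
    _ = (exp (-l) - 1) / l ^ 2 + 1 / l + 1 / (k + 1) / 2 := integral_majorant hl hr₀
    _ ≤ (1 / l + 1 / (k + 1)) * (1 - exp (-l)) := sub_one_div_sq_add_le hl hr₀ hr₁
end

section
/- (Fréchet approximation for maxima of Pareto variables) For each integer n ≥ 1, let X_1, …, X_n be i.i.d. Pareto random variables with shape parameter α > 0 and scale parameter φ > 0, i.e. P(X_1 ≤ y) = 1 − (φ/y)^α for y ≥ φ and 0 for y < φ. Then for all x > 0, | P( X_(n) ≤ φ n^{1/α} x ) − exp(−x^{−α}) | ≤ (log n)/n + 1/n. -/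
/-! With `t = x ^ (-α)`, the distribution function of the maximum at `φ n^(1/α) x` is
`(1 - t/n)^n` when `t ≤ n` and `0` otherwise. On `t ≤ n` it is squeezed between
`e^(-t) (1 - t²/n)` and `e^(-t)`: the lower bound comes from `(1 - u) e^u ≥ 1 - u²` at `u = t/n`
followed by Bernoulli's inequality, and `t² e^(-t) ≤ 1` turns it into an error of at most `1/n`.
On `t > n` the distribution function vanishes and `e^(-t) ≤ 1/t < 1/n`. -/

open MeasureTheory ProbabilityTheory

namespace Real

lemma self_le_exp_half (x : ℝ) : x ≤ exp (x / 2) := by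
  rcases lt_or_ge x 0 with hx | hx
  · exact hx.le.trans (exp_pos _).le
  · nlinarith [quadratic_le_exp_of_nonneg (by positivity : 0 ≤ x / 2), sq_nonneg (x - 2)]

lemma sq_mul_exp_neg_le_one {t : ℝ} (ht : 0 ≤ t) : t ^ 2 * exp (-t) ≤ 1 := by
  have h : t ^ 2 ≤ exp t := by
    calc t ^ 2 ≤ exp (t / 2) ^ 2 := pow_le_pow_left₀ ht (self_le_exp_half t) 2
      _ = exp t := by rw [← exp_nat_mul]; ring_nf
  calc t ^ 2 * exp (-t) ≤ exp t * exp (-t) := by gcongr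
    _ = 1 := by rw [← exp_add, add_neg_cancel, exp_zero]

lemma one_sub_sq_le_one_sub_mul_exp {u : ℝ} (hu : u ≤ 1) : 1 - u ^ 2 ≤ (1 - u) * exp u := by
  nlinarith [add_one_le_exp u]

lemma exp_neg_mul_one_sub_le_one_sub_div_pow {n : ℕ} {t : ℝ} (ht : 0 ≤ t) (htn : t ≤ n) :
    exp (-t) * (1 - t ^ 2 / n) ≤ (1 - t / n) ^ n := by
  rcases eq_or_ne n 0 with rfl | hn
  · simpa using ht
  have hnR : (0 : ℝ) < n := by positivity
  have hu : t / n ≤ 1 := div_le_one_of_le₀ htn hnR.le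
  have hu0 : 0 ≤ t / n := by positivity
  have hbernoulli : 1 - t ^ 2 / n ≤ (1 - (t / n) ^ 2) ^ n := by
    calc 1 - t ^ 2 / n = 1 + n * -(t / n) ^ 2 := by field_simp; ring
      _ ≤ (1 + -(t / n) ^ 2) ^ n := one_add_mul_le_pow (by nlinarith) n
      _ = (1 - (t / n) ^ 2) ^ n := by ring
  calc exp (-t) * (1 - t ^ 2 / n) ≤ exp (-t) * (1 - (t / n) ^ 2) ^ n := by gcongr
    _ ≤ exp (-t) * ((1 - t / n) * exp (t / n)) ^ n := by
      gcongr
      · nlinarith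
      · exact one_sub_sq_le_one_sub_mul_exp hu
    _ = (1 - t / n) ^ n := by
      rw [mul_pow, ← exp_nat_mul, mul_div_cancel₀ _ hnR.ne', mul_left_comm, ← exp_add,
        neg_add_cancel, exp_zero, mul_one]

lemma abs_one_sub_div_pow_sub_exp_neg_le {n : ℕ} {t : ℝ} (ht : 0 ≤ t) (htn : t ≤ n) :
    |(1 - t / n) ^ n - exp (-t)| ≤ 1 / n := by
  rw [abs_sub_comm, abs_of_nonneg (sub_nonneg.2 (one_sub_div_pow_le_exp_neg htn))]
  calc exp (-t) - (1 - t / n) ^ n ≤ exp (-t) - exp (-t) * (1 - t ^ 2 / n) := by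
        linarith [exp_neg_mul_one_sub_le_one_sub_div_pow ht htn]
    _ = t ^ 2 * exp (-t) / n := by ring
    _ ≤ 1 / n := by gcongr; exact sq_mul_exp_neg_le_one ht

lemma exp_neg_le_one_div {n t : ℝ} (hn : 0 < n) (hnt : n ≤ t) : exp (-t) ≤ 1 / n := by
  rw [exp_neg, ← one_div]
  exact one_div_le_one_div_of_le hn (hnt.trans (by linarith [add_one_le_exp t]))

end Real

lemma ProbabilityTheory.iIndepFun.measure_forall_mem {Ω ι β : Type*} [MeasurableSpace Ω]
    [MeasurableSpace β] [Fintype ι] {μ : Measure Ω} {X : ι → Ω → β} (hX : iIndepFun X μ)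
    {s : Set β} (hs : MeasurableSet s) :
    μ {ω | ∀ i, X i ω ∈ s} = ∏ i, μ (X i ⁻¹' s) := by
  rw [← hX.meas_iInter fun i ↦ ⟨s, hs, rfl⟩]
  congr 1
  ext ω
  simp

lemma div_mul_rpow_one_div_mul_rpow_eq {α φ x : ℝ} {n : ℕ} (hα : α ≠ 0) (hφ : φ ≠ 0)
    (hx : 0 ≤ x) : (φ / (φ * (n : ℝ) ^ (1 / α) * x)) ^ α = x ^ (-α) / n := by
  have hr : 0 ≤ (n : ℝ) ^ (1 / α) := by positivity
  rw [mul_assoc, div_mul_cancel_left₀ hφ, Real.inv_rpow (by positivity), Real.mul_rpow hr hx,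
    one_div, Real.rpow_inv_rpow n.cast_nonneg hα, Real.rpow_neg hx]
  ring

theorem frechet_approx_max_pareto_general {Ω : Type*} [MeasurableSpace Ω] (P : Measure Ω)
    [IsProbabilityMeasure P] (n : ℕ) (hn : 1 ≤ n) (α φ : ℝ) (hα : 0 < α) (hφ : 0 < φ)
    (X : Fin n → Ω → ℝ)
    (hcdf : ∀ i y, P {ω | X i ω ≤ y} =
      ENNReal.ofReal (if φ ≤ y then 1 - (φ / y) ^ α else 0))
    (hindep : iIndepFun X P) :
    ∀ x : ℝ, 0 < x →
      |(P {ω | ∀ i, X i ω ≤ φ * (n : ℝ) ^ (1 / α) * x}).toReal - Real.exp (-x ^ (-α))|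
        ≤ Real.log n / n + 1 / n := by
  intro x hx
  set y := φ * (n : ℝ) ^ (1 / α) * x
  have hnR : (0 : ℝ) < n := by exact_mod_cast hn
  have hy : 0 < y := by positivity
  have htail : (φ / y) ^ α = x ^ (-α) / n := div_mul_rpow_one_div_mul_rpow_eq hα.ne' hφ.ne' hx.le
  set c : ℝ := if φ ≤ y then 1 - (φ / y) ^ α else 0 with hc
  have hmax : P {ω | ∀ i, X i ω ≤ y} = ENNReal.ofReal c ^ n := by
    calc P {ω | ∀ i, X i ω ≤ y} = ∏ i, P {ω | X i ω ≤ y} :=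
          hindep.measure_forall_mem measurableSet_Iic
      _ = ENNReal.ofReal c ^ n := by simp [hcdf, hc]
  obtain ⟨hc0, hdist⟩ : 0 ≤ c ∧ |c ^ n - Real.exp (-x ^ (-α))| ≤ 1 / n := by
    split_ifs at hc with hφy <;> rw [hc]
    · have htn : x ^ (-α) ≤ n := by
        rw [← div_le_one hnR, ← htail]
        exact Real.rpow_le_one (by positivity) ((div_le_one hy).2 hφy) hα.le
      rw [htail]
      exact ⟨sub_nonneg.2 (div_le_one_of_le₀ htn hnR.le),
        Real.abs_one_sub_div_pow_sub_exp_neg_le (by positivity) htn⟩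
    · have hnt : (n : ℝ) ≤ x ^ (-α) := by
        rw [← one_le_div hnR, ← htail]
        exact (Real.one_lt_rpow ((one_lt_div hy).2 (not_le.1 hφy)) hα).le
      rw [zero_pow (by omega), zero_sub, abs_neg, abs_of_pos (Real.exp_pos _)]
      exact ⟨le_rfl, Real.exp_neg_le_one_div hnR hnt⟩
  rw [hmax, ENNReal.toReal_pow, ENNReal.toReal_ofReal hc0]
  have hlog : 0 ≤ Real.log n / n := div_nonneg (Real.log_natCast_nonneg n) hnR.le
  linarith

/-- **Fréchet approximation for maxima of Pareto variables.** If `X₁, …, Xₙ` are i.i.d.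
Pareto random variables with shape `α > 0` and scale `φ > 0`, then for all `x > 0`,
`|P(X₍ₙ₎ ≤ φ n^{1/α} x) − exp(−x^{−α})| ≤ (log n)/n + 1/n`. -/
theorem frechet_approx_max_pareto {Ω : Type*} [MeasurableSpace Ω] (P : Measure Ω)
    [IsProbabilityMeasure P] (n : ℕ) (hn : 1 ≤ n) (α φ : ℝ) (hα : 0 < α) (hφ : 0 < φ)
    (X : Fin n → Ω → ℝ)
    (hmeas : ∀ i, Measurable (X i))
    (hcdf : ∀ i y, P {ω | X i ω ≤ y} =
      ENNReal.ofReal (if φ ≤ y then 1 - (φ / y) ^ α else 0))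
    (hindep : iIndepFun X P) :
    ∀ x : ℝ, 0 < x →
      |(P {ω | ∀ i, X i ω ≤ φ * (n : ℝ) ^ (1 / α) * x}).toReal - Real.exp (-x ^ (-α))|
        ≤ Real.log n / n + 1 / n :=
  frechet_approx_max_pareto_general P n hn α φ hα hφ X hcdf hindep
end

section
/- (Fréchet approximation for maxima of standard Cauchy variables) For each integer n ≥ 1, let X_1, …, X_n be i.i.d. standard Cauchy random variables, i.e. with distribution function F(y) = arctan(y)/π + 1/2 and density 1/(π(1 + y²)) on ℝ. Then for all x > 0, | P( X_(n) ≤ n x / π ) − exp(−x^{−1}) | ≤ (log n)/n + π² (log n)³/(3 n²) + 1/n. -/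
open MeasureTheory ProbabilityTheory Real

/-!
For `x > 0`, `F(n x / π) = 1 - u` with `u = arctan (π / (n x)) / π`, and `t - t³/3 ≤ arctan t ≤ t`
puts `v = n u` at most `π² x⁻³ / (3 n²)` below `x⁻¹`. Since `exp (-u - 2u²) ≤ 1 - u ≤ exp (-u)`,
`(1 - u)ⁿ` lies between `exp (-v) (1 - 2v²/n)` and `exp (-v)`, and `exp` is `1`-Lipschitz on
`(-∞, 0]`. With `δ = π² (log n)³ / (3 n²)`: for `x⁻¹ ≤ log n` the error is at most
`δ + 2v² exp (-v) / n ≤ δ + (1 + log n) / n`; for `x⁻¹ > log n` the same estimates at `log n` show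
that `(1 - u)ⁿ ≤ 1/n + δ` and `exp (-x⁻¹) ≤ 1/n`.
-/

namespace Real

lemma arctan_le_self {t : ℝ} (ht : 0 ≤ t) : arctan t ≤ t := by
  have hmono : Monotone (fun t : ℝ => t - arctan t) :=
    monotone_of_hasDerivAt_nonneg (f' := fun x => 1 - 1 / (1 + x ^ 2))
      (fun x => (hasDerivAt_id' x).sub (hasDerivAt_arctan x))
      (fun x => show (0 : ℝ) ≤ 1 - 1 / (1 + x ^ 2) by
        rw [sub_nonneg, div_le_one (by positivity)]
        nlinarith [sq_nonneg x])
  simpa using hmono ht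

lemma sub_pow_three_div_three_le_arctan {t : ℝ} (ht : 0 ≤ t) : t - t ^ 3 / 3 ≤ arctan t := by
  have hmono : Monotone (fun t : ℝ => arctan t - (t - t ^ 3 / 3)) :=
    monotone_of_hasDerivAt_nonneg (f' := fun x => 1 / (1 + x ^ 2) - (1 - x ^ 2))
      (fun x => (hasDerivAt_arctan x).sub
        (((hasDerivAt_id' x).sub ((hasDerivAt_pow 3 x).div_const 3)).congr_deriv (by ring)))
      (fun x => show (0 : ℝ) ≤ 1 / (1 + x ^ 2) - (1 - x ^ 2) by
        rw [sub_nonneg, le_div_iff₀ (by positivity)]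
        nlinarith [sq_nonneg (x ^ 2)])
  simpa using hmono ht

lemma exp_neg_sub_exp_neg_le {a b : ℝ} (ha : 0 ≤ a) (hab : a ≤ b) :
    exp (-a) - exp (-b) ≤ b - a := by
  have hsplit : exp (-b) = exp (-a) * exp (-(b - a)) := by rw [← exp_add]; ring_nf
  have hexp_a : exp (-a) ≤ 1 := exp_le_one_iff.mpr (by linarith)
  rw [hsplit]
  nlinarith [mul_le_mul_of_nonneg_left (one_sub_le_exp_neg (b - a)) (exp_pos (-a)).le,
    mul_le_mul_of_nonneg_right hexp_a (sub_nonneg.mpr hab)]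

lemma exp_neg_le_exp_neg_add {a b δ : ℝ} (ha : 0 ≤ a) (hδ : 0 ≤ δ) (h : b - δ ≤ a) :
    exp (-a) ≤ exp (-b) + δ := by
  rcases le_total a b with hab | hba
  · linarith [exp_neg_sub_exp_neg_le ha hab]
  · linarith [exp_le_exp.mpr (neg_le_neg hba)]

lemma two_mul_sq_mul_exp_neg_le {v : ℝ} (hv : 0 ≤ v) : 2 * v ^ 2 * exp (-v) ≤ 1 + v := by
  rw [exp_neg, ← div_eq_mul_inv, div_le_iff₀ (exp_pos v)]
  nlinarith [mul_le_mul_of_nonneg_left (quadratic_le_exp_of_nonneg hv) (by linarith : 0 ≤ 1 + v),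
    mul_nonneg hv (sq_nonneg (v - 1))]

lemma exp_neg_add_two_mul_sq_le_one_sub {u : ℝ} (hu : u ≤ 1 / 2) :
    exp (-(u + 2 * u ^ 2)) ≤ 1 - u := by
  have h1u : 0 < 1 - u := by linarith
  have hinv : (1 - u)⁻¹ ≤ 1 + u + 2 * u ^ 2 := by
    rw [inv_le_iff_one_le_mul₀ h1u]
    nlinarith [mul_nonneg (sq_nonneg u) (by linarith : (0 : ℝ) ≤ 1 - 2 * u)]
  rw [← exp_log h1u]
  exact exp_le_exp.mpr (by linarith [one_sub_inv_le_log_of_pos h1u])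

lemma exp_neg_mul_sub_one_sub_pow_le (n : ℕ) {u : ℝ} (hu : u ≤ 1 / 2) :
    exp (-(n * u)) - (1 - u) ^ n ≤ 2 * n * u ^ 2 * exp (-(n * u)) := by
  have hpow : exp (-(n * u)) * exp (-(2 * n * u ^ 2)) ≤ (1 - u) ^ n :=
    calc exp (-(n * u)) * exp (-(2 * n * u ^ 2)) = exp (-(u + 2 * u ^ 2)) ^ n := by
          rw [← exp_nat_mul, ← exp_add]; ring_nf
      _ ≤ (1 - u) ^ n := pow_le_pow_left₀ (exp_pos _).le (exp_neg_add_two_mul_sq_le_one_sub hu) n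
  nlinarith [mul_le_mul_of_nonneg_left (one_sub_le_exp_neg (2 * n * u ^ 2)) (exp_pos (-(n * u))).le]

lemma one_sub_pow_le_exp_neg_mul (n : ℕ) {u : ℝ} (hu : u ≤ 1) : (1 - u) ^ n ≤ exp (-(n * u)) :=
  calc (1 - u) ^ n ≤ exp (-u) ^ n := pow_le_pow_left₀ (by linarith) (one_sub_le_exp_neg u) n
    _ = exp (-(n * u)) := by rw [← exp_nat_mul]; ring_nf

end Real

lemma abs_one_sub_pow_sub_exp_neg_le {n : ℕ} (hn : 1 ≤ n) {u I δ : ℝ} (hu0 : 0 ≤ u)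
    (hu : u ≤ 1 / 2) (hδ : 0 ≤ δ) (hvI : n * u ≤ I) (hv : min I (log n) - δ ≤ n * u) :
    |(1 - u) ^ n - exp (-I)| ≤ log n / n + δ + 1 / n := by
  have hn0 : (0 : ℝ) < n := by exact_mod_cast hn
  have hlog : 0 ≤ log n / n := by positivity
  have hexp_log : exp (-log n) = 1 / n := by rw [exp_neg, exp_log hn0, one_div]
  have hv0 : 0 ≤ n * u := by positivity
  have hpow := one_sub_pow_le_exp_neg_mul n (by linarith : u ≤ 1)
  rw [abs_sub_le_iff]
  constructor
  · have hmin : exp (-min I (log n)) ≤ exp (-I) + 1 / n := by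
      rcases min_cases I (log n) with ⟨h, -⟩ | ⟨h, -⟩ <;> rw [h]
      · linarith [one_div_pos.mpr hn0]
      · linarith [exp_pos (-I)]
    linarith [exp_neg_le_exp_neg_add hv0 hδ hv]
  · rcases le_total I (log n) with hIL | hLI
    · have hexp_I : exp (-I) ≤ exp (-(n * u)) := exp_le_exp.mpr (by linarith)
      calc exp (-I) - (1 - u) ^ n ≤ exp (-(n * u)) - (1 - u) ^ n := by linarith
        _ ≤ 2 * n * u ^ 2 * exp (-(n * u)) := exp_neg_mul_sub_one_sub_pow_le n hu
        _ = 2 * (n * u) ^ 2 * exp (-(n * u)) / n := by field_simp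
        _ ≤ (1 + n * u) / n := by gcongr; exact two_mul_sq_mul_exp_neg_le hv0
        _ ≤ (1 + log n) / n := by gcongr; linarith
        _ ≤ log n / n + δ + 1 / n := by rw [add_div]; linarith
    · have hexp_I : exp (-I) ≤ exp (-log n) := exp_le_exp.mpr (by linarith)
      have hpow_nonneg : 0 ≤ (1 - u) ^ n := pow_nonneg (by linarith) n
      linarith

lemma arctan_div_pi_add_half_of_pos {y : ℝ} (hy : 0 < y) :
    arctan y / π + 1 / 2 = 1 - arctan y⁻¹ / π := by
  rw [arctan_inv_of_pos hy]
  field_simp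
  ring

lemma mul_arctan_pi_mul_div_div_pi_le {N c : ℝ} (hN : 0 < N) (hc : 0 ≤ c) :
    N * (arctan (π * c / N) / π) ≤ c :=
  calc N * (arctan (π * c / N) / π) ≤ N * (π * c / N / π) := by
        gcongr; exact arctan_le_self (by positivity)
    _ = c := by field_simp

lemma sub_le_mul_arctan_pi_mul_div_div_pi {N c : ℝ} (hN : 0 < N) (hc : 0 ≤ c) :
    c - π ^ 2 * c ^ 3 / (3 * N ^ 2) ≤ N * (arctan (π * c / N) / π) :=
  calc c - π ^ 2 * c ^ 3 / (3 * N ^ 2) = N * ((π * c / N - (π * c / N) ^ 3 / 3) / π) := by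
        field_simp
    _ ≤ N * (arctan (π * c / N) / π) := by
        gcongr; exact sub_pow_three_div_three_le_arctan (by positivity)

lemma measure_forall_le_eq_pow {Ω ι : Type*} [MeasurableSpace Ω] [Fintype ι] {P : Measure Ω}
    {X : ι → Ω → ℝ} (hX : iIndepFun X P) {y : ℝ} {p : ENNReal}
    (hp : ∀ i, P {ω | X i ω ≤ y} = p) :
    P {ω | ∀ i, X i ω ≤ y} = p ^ Fintype.card ι := by
  have hset : {ω | ∀ i, X i ω ≤ y} = ⋂ i, X i ⁻¹' Set.Iic y := by ext; simp
  rw [hset, hX.meas_iInter fun i => ⟨Set.Iic y, measurableSet_Iic, rfl⟩]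
  simp only [Set.preimage, Set.mem_Iic, hp, Finset.prod_const, Finset.card_univ]

theorem frechet_approx_max_cauchy_general {Ω : Type*} [MeasurableSpace Ω] (P : Measure Ω)
    (n : ℕ) (hn : 1 ≤ n) (X : Fin n → Ω → ℝ)
    (hcdf : ∀ i y, P {ω | X i ω ≤ y} = ENNReal.ofReal (Real.arctan y / π + 1 / 2))
    (hindep : iIndepFun X P) :
    ∀ x : ℝ, 0 < x →
      |(P {ω | ∀ i, X i ω ≤ n * x / π}).toReal - Real.exp (-x⁻¹)|
        ≤ Real.log n / n + π ^ 2 * (Real.log n) ^ 3 / (3 * n ^ 2) + 1 / n := by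
  intro x hx
  have hn0 : (0 : ℝ) < n := by exact_mod_cast hn
  set u := arctan (π * x⁻¹ / n) / π
  have hF : arctan (n * x / π) / π + 1 / 2 = 1 - u := by
    rw [arctan_div_pi_add_half_of_pos (by positivity),
      show (n * x / π)⁻¹ = π * x⁻¹ / n by field_simp]
  have hu : u ≤ 1 / 2 := by
    rw [div_le_iff₀ pi_pos]
    linarith [arctan_lt_pi_div_two (π * x⁻¹ / n)]
  have hv : min x⁻¹ (log n) - π ^ 2 * (log n) ^ 3 / (3 * n ^ 2) ≤ n * u := by
    have hc : 0 ≤ min x⁻¹ (log n) := le_min (by positivity) (log_nonneg (by exact_mod_cast hn))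
    calc min x⁻¹ (log n) - π ^ 2 * (log n) ^ 3 / (3 * n ^ 2)
        ≤ min x⁻¹ (log n) - π ^ 2 * (min x⁻¹ (log n)) ^ 3 / (3 * n ^ 2) := by
          gcongr; exact min_le_right _ _
      _ ≤ n * (arctan (π * min x⁻¹ (log n) / n) / π) :=
          sub_le_mul_arctan_pi_mul_div_div_pi hn0 hc
      _ ≤ n * (arctan (π * x⁻¹ / n) / π) := by
          gcongr; exact min_le_left _ _
  rw [measure_forall_le_eq_pow hindep fun i => hcdf i _, Fintype.card_fin, hF,
    ENNReal.toReal_pow, ENNReal.toReal_ofReal (by linarith)]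
  exact abs_one_sub_pow_sub_exp_neg_le hn (by positivity) hu (by positivity)
    (mul_arctan_pi_mul_div_div_pi_le hn0 (by positivity)) hv

/-- **Fréchet approximation for maxima of standard Cauchy variables.** If `X₁, …, Xₙ` are
i.i.d. standard Cauchy random variables, with distribution function
`F(y) = arctan(y)/π + 1/2`, then for all `x > 0`,
`|P(X₍ₙ₎ ≤ n x/π) − exp(−x⁻¹)| ≤ (log n)/n + π² (log n)³/(3n²) + 1/n`. -/
theorem frechet_approx_max_cauchy {Ω : Type*} [MeasurableSpace Ω] (P : Measure Ω)
    [IsProbabilityMeasure P] (n : ℕ) (hn : 1 ≤ n) (X : Fin n → Ω → ℝ)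
    (hmeas : ∀ i, Measurable (X i))
    (hcdf : ∀ i y, P {ω | X i ω ≤ y} = ENNReal.ofReal (Real.arctan y / π + 1 / 2))
    (hindep : iIndepFun X P) :
    ∀ x : ℝ, 0 < x →
      |(P {ω | ∀ i, X i ω ≤ n * x / π}).toReal - Real.exp (-x⁻¹)|
        ≤ Real.log n / n + π ^ 2 * (Real.log n) ^ 3 / (3 * n ^ 2) + 1 / n :=
  frechet_approx_max_cauchy_general P n hn X hcdf hindep
end

section
/- (Approximation of geometric maxima by the continuous Gumbel distribution) For each integer n ≥ 1, let X_1, …, X_n be i.i.d. geometric random variables with success probability p ∈ (0,1) and failure probability q = 1 − p. Then for all x ∈ ℝ, | P( X_(n) < (log n + x)/log(1/q) ) − exp(−e^{−x}) | ≤ (log n)/(q n) + 1/n + e^{−1} log(1/q). -/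
open MeasureTheory ProbabilityTheory Real

/-!
Put `L = log (1 / q)`, `u = (log n + x) / L` and `m = ⌈u⌉₊`. The event is `max Xᵢ < m`, which
by independence has probability `(1 - q ^ m) ^ n`. Since `n q ^ m = e ^ (-x')` with
`x' = L m - log n`, Bernoulli's inequality puts `(1 - q ^ m) ^ n` within `1 / n` below
`e ^ (-n q ^ m) = Λ(x')`. Finally `x ≤ x' < x + L` when `u > 0`, and `Λ` is `e⁻¹`-Lipschitz; when
`u ≤ 0` the event is empty.
-/

lemma sq_le_exp {t : ℝ} (ht : 0 ≤ t) : t ^ 2 ≤ exp t := by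
  have h₁ : t / 2 ≤ exp (t / 2 - 1) := by linarith [add_one_le_exp (t / 2 - 1)]
  have h₂ : 2 ≤ exp 1 := by linarith [add_one_le_exp 1]
  have h₃ : t ≤ exp (t / 2) := by
    rw [exp_sub, le_div_iff₀ (exp_pos 1)] at h₁
    nlinarith [exp_pos (t / 2)]
  calc t ^ 2 ≤ exp (t / 2) ^ 2 := pow_le_pow_left₀ ht h₃ 2
    _ = exp t := by rw [← exp_nat_mul]; ring_nf

lemma one_sub_pow_le_exp_neg_mul {s : ℝ} (hs : s ≤ 1) (n : ℕ) :
    (1 - s) ^ n ≤ exp (-(n * s)) := by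
  calc (1 - s) ^ n ≤ exp (-s) ^ n := pow_le_pow_left₀ (by linarith) (one_sub_le_exp_neg s) n
    _ = exp (-(n * s)) := by rw [← exp_nat_mul]; ring_nf

/-- Since `e ^ s (1 - s) ≥ 1 - s ^ 2`, Bernoulli's inequality gives
`(1 - s) ^ n ≥ e ^ (-n s) (1 - n s ^ 2)`, and `(n s) ^ 2 ≤ e ^ (n s)`. -/
lemma exp_neg_mul_sub_one_sub_pow_le {s : ℝ} (hs₀ : 0 ≤ s) (hs₁ : s ≤ 1) (n : ℕ) :
    exp (-(n * s)) - (1 - s) ^ n ≤ 1 / n := by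
  have hfactor : exp (-s) * (1 - s ^ 2) ≤ 1 - s := by
    have := add_one_le_exp s
    rw [exp_neg, inv_mul_le_iff₀ (exp_pos s)]
    nlinarith
  have hbernoulli : 1 - n * s ^ 2 ≤ (1 - s ^ 2) ^ n := by
    simpa [sub_eq_add_neg] using one_add_mul_le_pow (a := -s ^ 2) (by nlinarith) n
  have hlower : exp (-(n * s)) * (1 - n * s ^ 2) ≤ (1 - s) ^ n := by
    calc exp (-(n * s)) * (1 - n * s ^ 2) ≤ exp (-(n * s)) * (1 - s ^ 2) ^ n :=
          mul_le_mul_of_nonneg_left hbernoulli (exp_pos _).le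
      _ = (exp (-s) * (1 - s ^ 2)) ^ n := by rw [mul_pow, ← exp_nat_mul]; ring_nf
      _ ≤ (1 - s) ^ n :=
          pow_le_pow_left₀ (mul_nonneg (exp_pos _).le (by nlinarith)) hfactor n
  rcases Nat.eq_zero_or_pos n with rfl | hn
  · simp
  have hsq := sq_le_exp (by positivity : 0 ≤ (n : ℝ) * s)
  have hn' : (0 : ℝ) < n := by exact_mod_cast hn
  have hquad : n * s ^ 2 * exp (-(n * s)) ≤ 1 / n := by
    rw [exp_neg, le_div_iff₀ hn']
    calc n * s ^ 2 * (exp (n * s))⁻¹ * n = (n * s) ^ 2 * (exp (n * s))⁻¹ := by ring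
      _ ≤ 1 := by rw [mul_inv_le_iff₀ (exp_pos _)]; linarith
  linarith

noncomputable def gumbelCDF (x : ℝ) : ℝ := exp (-exp (-x))

namespace gumbelCDF

lemma monotone : Monotone gumbelCDF := fun _ _ h ↦ by
  unfold gumbelCDF; gcongr

lemma nonneg (x : ℝ) : 0 ≤ gumbelCDF x := (exp_pos _).le

lemma hasDerivAt (x : ℝ) : HasDerivAt gumbelCDF (exp (-x) * exp (-exp (-x))) x := by
  have h : HasDerivAt (fun x ↦ -exp (-x)) (exp (-x)) x := by
    simpa using (hasDerivAt_neg x).exp.fun_neg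
  rw [mul_comm]; exact h.exp

/-- The Gumbel density `t e^{-t}` at `t = e^{-x}` is at most `e^{-1}`. -/
lemma sub_le {x y : ℝ} (hxy : x ≤ y) : gumbelCDF y - gumbelCDF x ≤ exp (-1) * (y - x) := by
  have hmono : Monotone fun z ↦ exp (-1) * z - gumbelCDF z := by
    have hderiv (z : ℝ) : HasDerivAt (fun z ↦ exp (-1) * z - gumbelCDF z)
        (exp (-1) - exp (-z) * exp (-exp (-z))) z := by
      simpa using ((hasDerivAt_id z).const_mul (exp (-1))).fun_sub (hasDerivAt z)
    refine monotone_of_deriv_nonneg (fun z ↦ (hderiv z).differentiableAt) fun z ↦ ?_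
    rw [(hderiv z).deriv]
    linarith [mul_exp_neg_le_exp_neg_one (exp (-z))]
  linarith [hmono hxy]

end gumbelCDF

lemma abs_one_sub_pow_ceil_sub_gumbelCDF_le {n : ℕ} (hn : n ≠ 0) {q : ℝ} (hq₀ : 0 < q)
    (hq₁ : q < 1) (x : ℝ) :
    |(1 - q ^ ⌈(log n + x) / log (1 / q)⌉₊) ^ n - gumbelCDF x| ≤
      1 / n + exp (-1) * log (1 / q) := by
  set L := log (1 / q)
  set u := (log n + x) / L
  set m := ⌈u⌉₊
  have hL : L = -log q := by simp [L, log_inv]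
  have hL₀ : 0 < L := by rw [hL]; linarith [log_neg hq₀ hq₁]
  have hLu : L * u = log n + x := mul_div_cancel₀ _ hL₀.ne'
  have hmean : (n : ℝ) * q ^ m = exp (-(L * m - log n)) := by
    rw [show -(L * m - log n) = log n + m * log q by rw [hL]; ring, exp_add,
      exp_log (by positivity), exp_nat_mul, exp_log hq₀]
  have hx : x ≤ L * m - log n := by nlinarith [Nat.le_ceil u]
  have hs₀ : 0 ≤ q ^ m := by positivity
  have hs₁ : q ^ m ≤ 1 := pow_le_one₀ hq₀.le hq₁.le
  have hpow_le := one_sub_pow_le_exp_neg_mul hs₁ n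
  have hpow_ge := exp_neg_mul_sub_one_sub_pow_le hs₀ hs₁ n
  have hgumbel : exp (-(n * q ^ m)) = gumbelCDF (L * m - log n) := by rw [hmean]; rfl
  rw [hgumbel] at hpow_le hpow_ge
  have hmono := gumbelCDF.monotone hx
  have hexp_L_pos : 0 < exp (-1) * L := by positivity
  have hupper : (1 - q ^ m) ^ n - gumbelCDF x ≤ exp (-1) * L := by
    rcases le_or_gt u 0 with hu | hu
    · have hm : m = 0 := Nat.ceil_eq_zero.2 hu
      rw [hm, pow_zero, sub_self, zero_pow hn]
      linarith [gumbelCDF.nonneg x]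
    · have hceil : (m : ℝ) < u + 1 := Nat.ceil_lt_add_one hu.le
      calc (1 - q ^ m) ^ n - gumbelCDF x ≤ gumbelCDF (L * m - log n) - gumbelCDF x := by
            linarith
        _ ≤ exp (-1) * (L * m - log n - x) := gumbelCDF.sub_le hx
        _ ≤ exp (-1) * L := by gcongr; nlinarith
  rw [abs_le]
  constructor <;> linarith

lemma measure_lt_eq_of_geometric {Ω : Type*} [MeasurableSpace Ω] {μ : Measure Ω} {q : ℝ}
    (hq₀ : 0 ≤ q) (hq₁ : q ≤ 1) {X : Ω → ℕ} (hX : Measurable X)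
    (hgeo : ∀ k, μ {ω | X ω = k} = ENNReal.ofReal ((1 - q) * q ^ k)) (m : ℕ) :
    μ {ω | X ω < m} = ENNReal.ofReal (1 - q ^ m) := by
  have hset : {ω | X ω < m} = X ⁻¹' ↑(Finset.range m) := by ext; simp
  rw [hset, ← sum_measure_preimage_singleton _ fun k _ ↦ hX (measurableSet_singleton k),
    ← mul_neg_geom_sum, Finset.mul_sum,
    ENNReal.ofReal_sum_of_nonneg fun k _ ↦ by have := pow_nonneg hq₀ k; nlinarith]
  exact Finset.sum_congr rfl fun k _ ↦ hgeo k

lemma measure_forall_lt_eq_of_iIndepFun {Ω ι : Type*} [MeasurableSpace Ω] [Fintype ι]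
    {μ : Measure Ω} {q : ℝ} (hq₀ : 0 ≤ q) (hq₁ : q ≤ 1) {X : ι → Ω → ℕ}
    (hX : ∀ i, Measurable (X i))
    (hgeo : ∀ i k, μ {ω | X i ω = k} = ENNReal.ofReal ((1 - q) * q ^ k))
    (hindep : iIndepFun X μ) (m : ℕ) :
    μ {ω | ∀ i, X i ω < m} = ENNReal.ofReal ((1 - q ^ m) ^ Fintype.card ι) := by
  have hset : {ω | ∀ i, X i ω < m} = ⋂ i, X i ⁻¹' Set.Iio m := by ext; simp
  rw [hset, hindep.meas_iInter fun i ↦ ⟨Set.Iio m, measurableSet_Iio, rfl⟩,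
    ENNReal.ofReal_pow (sub_nonneg.2 (pow_le_one₀ hq₀ hq₁)), ← Finset.card_univ,
    ← Finset.prod_const]
  exact Finset.prod_congr rfl fun i _ ↦ measure_lt_eq_of_geometric hq₀ hq₁ (hX i) (hgeo i) m

theorem geometric_max_continuous_gumbel_general {Ω : Type*} [MeasurableSpace Ω] (P : Measure Ω)
    (n : ℕ) (hn : 1 ≤ n) (p q : ℝ) (hp : 0 < p) (hp1 : p < 1)
    (hq : q = 1 - p) (X : Fin n → Ω → ℕ)
    (hmeas : ∀ i, Measurable (X i))
    (hgeo : ∀ i k, P {ω | X i ω = k} = ENNReal.ofReal (p * q ^ k))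
    (hindep : iIndepFun X P) :
    ∀ x : ℝ,
      |(P {ω | ∀ i, (X i ω : ℝ) < (Real.log n + x) / Real.log (1 / q)}).toReal -
          Real.exp (-Real.exp (-x))| ≤
        Real.log n / (q * n) + 1 / n + Real.exp (-1) * Real.log (1 / q) := by
  intro x
  obtain rfl : p = 1 - q := by linarith
  have hq₀ : 0 < q := by linarith
  have hq₁ : q < 1 := by linarith
  simp_rw [← Nat.lt_ceil]
  rw [measure_forall_lt_eq_of_iIndepFun hq₀.le hq₁.le hmeas hgeo hindep, Fintype.card_fin,
    ENNReal.toReal_ofReal (pow_nonneg (sub_nonneg.2 (pow_le_one₀ hq₀.le hq₁.le)) n)]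
  have hlog : 0 ≤ Real.log n / (q * n) := by positivity
  exact (abs_one_sub_pow_ceil_sub_gumbelCDF_le (by omega) hq₀ hq₁ x).trans (by linarith)

/-- **Approximation of geometric maxima by the continuous Gumbel distribution.** Let
`X₁, …, Xₙ` be i.i.d. geometric random variables with success probability `p ∈ (0,1)` and
failure probability `q = 1 − p`.  Then for all `x ∈ ℝ`,
`|P(X₍ₙ₎ < (log n + x)/log(1/q)) − exp(−e^{−x})| ≤ (log n)/(qn) + 1/n + e^{−1} log(1/q)`. -/
theorem geometric_max_continuous_gumbel {Ω : Type*} [MeasurableSpace Ω] (P : Measure Ω)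
    [IsProbabilityMeasure P] (n : ℕ) (hn : 1 ≤ n) (p q : ℝ) (hp : 0 < p) (hp1 : p < 1)
    (hq : q = 1 - p) (X : Fin n → Ω → ℕ)
    (hmeas : ∀ i, Measurable (X i))
    (hgeo : ∀ i k, P {ω | X i ω = k} = ENNReal.ofReal (p * q ^ k))
    (hindep : iIndepFun X P) :
    ∀ x : ℝ,
      |(P {ω | ∀ i, (X i ω : ℝ) < (Real.log n + x) / Real.log (1 / q)}).toReal -
          Real.exp (-Real.exp (-x))| ≤
        Real.log n / (q * n) + 1 / n + Real.exp (-1) * Real.log (1 / q) :=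
  geometric_max_continuous_gumbel_general P n hn p q hp hp1 hq X hmeas hgeo hindep
end

section
/- (Parameter inequalities for the Marshall–Olkin geometric distribution) Let p ∈ (0,1) and γ, δ > 0 satisfy (1 + γ + δ)p < 1, and set q_1 = 1 − (1 + γ)p, q_2 = 1 − (1 + δ)p, p_{00} = 1 − (1 + γ + δ)p. Then: (i) 0 ≤ (1+δ)/(1+γ+δ) − (log q_2)/(log p_{00}) ≤ γ p / (1 − (1+γ+δ)p); (ii) 0 ≤ (1+γ)/(1+γ+δ) − (log q_1)/(log p_{00}) ≤ δ p / (1 − (1+γ+δ)p); (iii) 0 ≤ log(q_2 / p_{00}) ≤ γ p / (1 − (1+γ+δ)p); (iv) 0 ≤ log(q_1 / p_{00}) ≤ δ p / (1 − (1+γ+δ)p); (v) log(1/p_{00}) · log( p_{00}/(q_1 q_2) ) ≤ (1+γ+δ)p / (1 − (1+γ+δ)p)². -/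
/-!
Everything follows from two properties of `log` applied to `P = p₀₀ ≤ Q ≤ 1`, where `Q` is either
marginal, `q₁` or `q₂`. Concavity: `Q` is the convex combination of `1` and `P` with weight
`(1 - Q)/(1 - P)` on `P`, which gives the lower bound in (i) and (ii). The tangent line bound
`log x ≤ x - 1` gives `log (Q/P) ≤ (Q - P)/P` and `-log P ≥ 1 - P`, hence (iii), (iv) and the upper
bounds in (i), (ii). For (v), `P² ≤ q₁ q₂` gives `log (P/(q₁ q₂)) ≤ log (1/P) ≤ (1 - P)/P`, so the
product is at most `((1 - P)/P)² ≤ (1 - P)/P²`. In the model `Q - P` is `γ p` or `δ p`, and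
`1 - P = (1 + γ + δ) p`.
-/

open Real

namespace Real

lemma log_div_le_sub_div {P Q : ℝ} (hP : 0 < P) (hQ : 0 < Q) : log (Q / P) ≤ (Q - P) / P := by
  calc log (Q / P) ≤ Q / P - 1 := log_le_sub_one_of_pos (div_pos hQ hP)
    _ = (Q - P) / P := by rw [sub_div, div_self hP.ne']

lemma one_sub_div_one_sub_mul_log_le_log {P Q : ℝ} (hP : 0 < P) (hP1 : P < 1) (hPQ : P ≤ Q)
    (hQ1 : Q ≤ 1) : (1 - Q) / (1 - P) * log P ≤ log Q := by
  have h1P : 0 < 1 - P := sub_pos.2 hP1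
  have hconc := strictConcaveOn_log_Ioi.concaveOn.2 (Set.mem_Ioi.2 one_pos) (Set.mem_Ioi.2 hP)
    (div_nonneg (sub_nonneg.2 hPQ) h1P.le) (div_nonneg (sub_nonneg.2 hQ1) h1P.le)
    (by rw [← add_div, div_eq_one_iff_eq h1P.ne']; ring)
  have hcomb : (Q - P) / (1 - P) * 1 + (1 - Q) / (1 - P) * P = Q := by
    rw [mul_one, div_mul_eq_mul_div, ← add_div, div_eq_iff h1P.ne']; ring
  simpa only [smul_eq_mul, hcomb, log_one, mul_zero, zero_add] using hconc

lemma log_div_log_le_one_sub_div_one_sub {P Q : ℝ} (hP : 0 < P) (hP1 : P < 1) (hPQ : P ≤ Q)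
    (hQ1 : Q ≤ 1) : log Q / log P ≤ (1 - Q) / (1 - P) :=
  (div_le_iff_of_neg (log_neg hP hP1)).2 (one_sub_div_one_sub_mul_log_le_log hP hP1 hPQ hQ1)

lemma one_sub_log_div_log {P Q : ℝ} (hP : 0 < P) (hP1 : P < 1) (hQ : 0 < Q) :
    1 - log Q / log P = log (Q / P) / -log P := by
  have hlogP : log P ≠ 0 := (log_neg hP hP1).ne
  rw [log_div hQ.ne' hP.ne']
  field_simp
  ring

lemma one_sub_div_one_sub_sub_log_div_log_le {P Q : ℝ} (hP : 0 < P) (hP1 : P < 1) (hPQ : P ≤ Q) :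
    (1 - Q) / (1 - P) - log Q / log P ≤ (Q - P) / P := by
  have h1P : 0 < 1 - P := sub_pos.2 hP1
  have hlogP : 1 - P ≤ -log P := by linarith [log_le_sub_one_of_pos hP]
  calc (1 - Q) / (1 - P) - log Q / log P
        = (1 - log Q / log P) - (Q - P) / (1 - P) := by field_simp; ring
    _ = log (Q / P) / -log P - (Q - P) / (1 - P) := by
          rw [one_sub_log_div_log hP hP1 (hP.trans_le hPQ)]
    _ ≤ (Q - P) / P / (1 - P) - (Q - P) / (1 - P) :=
          sub_le_sub_right (div_le_div₀ (div_nonneg (sub_nonneg.2 hPQ) hP.le)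
            (log_div_le_sub_div hP (hP.trans_le hPQ)) h1P hlogP) _
    _ = (Q - P) / P := by field_simp

lemma log_one_div_mul_log_div_mul_le {P Q₁ Q₂ : ℝ} (hP : 0 < P) (hP1 : P ≤ 1) (hPQ₁ : P ≤ Q₁)
    (hPQ₂ : P ≤ Q₂) : log (1 / P) * log (P / (Q₁ * Q₂)) ≤ (1 - P) / P ^ 2 := by
  have hlog_nonneg : 0 ≤ log (1 / P) := log_nonneg ((one_le_div hP).2 hP1)
  have hsq : P * P ≤ Q₁ * Q₂ := mul_le_mul hPQ₁ hPQ₂ hP.le (hP.trans_le hPQ₁).le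
  have hQ₁Q₂ : 0 < Q₁ * Q₂ := (mul_pos hP hP).trans_le hsq
  have hle : log (P / (Q₁ * Q₂)) ≤ log (1 / P) := by
    refine log_le_log (div_pos hP hQ₁Q₂) ?_
    rw [div_le_div_iff₀ hQ₁Q₂ hP]
    linarith
  calc log (1 / P) * log (P / (Q₁ * Q₂)) ≤ log (1 / P) * log (1 / P) :=
        mul_le_mul_of_nonneg_left hle hlog_nonneg
    _ ≤ (1 - P) / P * ((1 - P) / P) :=
        mul_self_le_mul_self hlog_nonneg (log_div_le_sub_div hP one_pos)
    _ = (1 - P) ^ 2 / P ^ 2 := by ring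
    _ ≤ (1 - P) / P ^ 2 := by gcongr; nlinarith

end Real

lemma marginal_log_bounds {P Q : ℝ} (hP : 0 < P) (hP1 : P < 1) (hPQ : P ≤ Q) (hQ1 : Q ≤ 1) :
    (0 ≤ (1 - Q) / (1 - P) - log Q / log P ∧
      (1 - Q) / (1 - P) - log Q / log P ≤ (Q - P) / P) ∧
    (0 ≤ log (Q / P) ∧ log (Q / P) ≤ (Q - P) / P) :=
  ⟨⟨sub_nonneg.2 (log_div_log_le_one_sub_div_one_sub hP hP1 hPQ hQ1),
      one_sub_div_one_sub_sub_log_div_log_le hP hP1 hPQ⟩,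
    log_nonneg ((one_le_div hP).2 hPQ), log_div_le_sub_div hP (hP.trans_le hPQ)⟩

theorem marshall_olkin_geometric_parameter_inequalities_general
    (p γ δ q₁ q₂ p₀₀ : ℝ) (hp : 0 < p) (hγ : 0 < γ) (hδ : 0 < δ)
    (h : (1 + γ + δ) * p < 1)
    (hq₁ : q₁ = 1 - (1 + γ) * p) (hq₂ : q₂ = 1 - (1 + δ) * p)
    (hp₀₀ : p₀₀ = 1 - (1 + γ + δ) * p) :
    (0 ≤ (1 + δ) / (1 + γ + δ) - Real.log q₂ / Real.log p₀₀ ∧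
      (1 + δ) / (1 + γ + δ) - Real.log q₂ / Real.log p₀₀ ≤
        γ * p / (1 - (1 + γ + δ) * p)) ∧
    (0 ≤ (1 + γ) / (1 + γ + δ) - Real.log q₁ / Real.log p₀₀ ∧
      (1 + γ) / (1 + γ + δ) - Real.log q₁ / Real.log p₀₀ ≤
        δ * p / (1 - (1 + γ + δ) * p)) ∧
    (0 ≤ Real.log (q₂ / p₀₀) ∧
      Real.log (q₂ / p₀₀) ≤ γ * p / (1 - (1 + γ + δ) * p)) ∧
    (0 ≤ Real.log (q₁ / p₀₀) ∧
      Real.log (q₁ / p₀₀) ≤ δ * p / (1 - (1 + γ + δ) * p)) ∧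
    Real.log (1 / p₀₀) * Real.log (p₀₀ / (q₁ * q₂)) ≤
      (1 + γ + δ) * p / (1 - (1 + γ + δ) * p) ^ 2 := by
  have hS : 0 < 1 + γ + δ := by linarith
  have hP : 0 < p₀₀ := by linarith
  have hP1 : p₀₀ < 1 := by nlinarith
  have hPq₁ : p₀₀ ≤ q₁ := by nlinarith
  have hPq₂ : p₀₀ ≤ q₂ := by nlinarith
  have hq₁1 : q₁ ≤ 1 := by nlinarith
  have hq₂1 : q₂ ≤ 1 := by nlinarith
  have hw₁ : (1 + γ) / (1 + γ + δ) = (1 - q₁) / (1 - p₀₀) := by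
    rw [hq₁, hp₀₀]; field_simp; ring
  have hw₂ : (1 + δ) / (1 + γ + δ) = (1 - q₂) / (1 - p₀₀) := by
    rw [hq₂, hp₀₀]; field_simp; ring
  rw [← hp₀₀, hw₁, hw₂, show γ * p = q₂ - p₀₀ by rw [hq₂, hp₀₀]; ring,
    show δ * p = q₁ - p₀₀ by rw [hq₁, hp₀₀]; ring,
    show (1 + γ + δ) * p = 1 - p₀₀ by rw [hp₀₀]; ring]
  obtain ⟨hi, hiii⟩ := marginal_log_bounds hP hP1 hPq₂ hq₂1
  obtain ⟨hii, hiv⟩ := marginal_log_bounds hP hP1 hPq₁ hq₁1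
  exact ⟨hi, hii, hiii, hiv, log_one_div_mul_log_div_mul_le hP hP1.le hPq₁ hPq₂⟩

/-- **Parameter inequalities for the Marshall–Olkin geometric distribution.** Let
`p ∈ (0,1)` and `γ, δ > 0` with `(1+γ+δ)p < 1`, and set `q₁ = 1 − (1+γ)p`,
`q₂ = 1 − (1+δ)p`, `p₀₀ = 1 − (1+γ+δ)p`.  Then:
(i)  `0 ≤ (1+δ)/(1+γ+δ) − log q₂/log p₀₀ ≤ γp/(1 − (1+γ+δ)p)`;
(ii) `0 ≤ (1+γ)/(1+γ+δ) − log q₁/log p₀₀ ≤ δp/(1 − (1+γ+δ)p)`;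
(iii) `0 ≤ log(q₂/p₀₀) ≤ γp/(1 − (1+γ+δ)p)`;
(iv) `0 ≤ log(q₁/p₀₀) ≤ δp/(1 − (1+γ+δ)p)`;
(v)  `log(1/p₀₀) log(p₀₀/(q₁q₂)) ≤ (1+γ+δ)p/(1 − (1+γ+δ)p)²`. -/
theorem marshall_olkin_geometric_parameter_inequalities
    (p γ δ q₁ q₂ p₀₀ : ℝ) (hp : 0 < p) (hp1 : p < 1) (hγ : 0 < γ) (hδ : 0 < δ)
    (h : (1 + γ + δ) * p < 1)
    (hq₁ : q₁ = 1 - (1 + γ) * p) (hq₂ : q₂ = 1 - (1 + δ) * p)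
    (hp₀₀ : p₀₀ = 1 - (1 + γ + δ) * p) :
    (0 ≤ (1 + δ) / (1 + γ + δ) - Real.log q₂ / Real.log p₀₀ ∧
      (1 + δ) / (1 + γ + δ) - Real.log q₂ / Real.log p₀₀ ≤
        γ * p / (1 - (1 + γ + δ) * p)) ∧
    (0 ≤ (1 + γ) / (1 + γ + δ) - Real.log q₁ / Real.log p₀₀ ∧
      (1 + γ) / (1 + γ + δ) - Real.log q₁ / Real.log p₀₀ ≤
        δ * p / (1 - (1 + γ + δ) * p)) ∧
    (0 ≤ Real.log (q₂ / p₀₀) ∧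
      Real.log (q₂ / p₀₀) ≤ γ * p / (1 - (1 + γ + δ) * p)) ∧
    (0 ≤ Real.log (q₁ / p₀₀) ∧
      Real.log (q₁ / p₀₀) ≤ δ * p / (1 - (1 + γ + δ) * p)) ∧
    Real.log (1 / p₀₀) * Real.log (p₀₀ / (q₁ * q₂)) ≤
      (1 + γ + δ) * p / (1 - (1 + γ + δ) * p) ^ 2 :=
  marshall_olkin_geometric_parameter_inequalities_general p γ δ q₁ q₂ p₀₀ hp hγ hδ h hq₁ hq₂ hp₀₀
end

section
/- (Pointwise binomial–Poisson error bound) Let n ≥ 2 be an integer and p ∈ (0,1) with n p² ≤ 1/2, and let W be a binomial random variable with parameters n and p. Then for every integer k with 0 ≤ k ≤ n, | P(W = k) − e^{−np} (np)^k / k! | ≤ e^{3/4} · ( (np)^k / k! ) · e^{−np} · ( k²/n + n p² ). -/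
/-!
Write `P(W = k) = π_k R` with `π_k` the Poisson mass and
`R = ∏_{j<k} (1 - j/n) · (1 - p)^{n-k} · e^{np}`, and put `D = k²/n + np²`.
Sandwiching every factor as `e^{-t-2t²} ≤ 1 - t ≤ e^{-t}` (for `0 ≤ t ≤ 1/2`) gives
`log R ≤ kp - k(k-1)/(2n) ≤ min (3/4) (D/2)`, hence `R - 1 ≤ e^{3/4} D/2` via `e^x - 1 ≤ x e^x`;
and, when `k ≤ n/2`, `log R ≥ -2D`, hence `1 - R ≤ 2D`. For larger `k` already `D ≥ 1/2`,
while `1 - R ≤ 1`. Finally `2 ≤ e^{3/4}`.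
-/

open Finset Real
open scoped Nat

lemma exp_neg_add_two_mul_sq_le_one_sub {t : ℝ} (h0 : 0 ≤ t) (h1 : t ≤ 1 / 2) :
    exp (-(t + 2 * t ^ 2)) ≤ 1 - t := by
  have hy : 0 ≤ t + 2 * t ^ 2 := by positivity
  have hs : 1 + (t + 2 * t ^ 2) + (t + 2 * t ^ 2) ^ 2 / 2 ≤ exp (t + 2 * t ^ 2) := by
    have h3 := sum_le_exp_of_nonneg hy 3
    simp only [sum_range_succ, Nat.factorial] at h3
    norm_num at h3
    linarith
  rw [exp_neg, inv_le_iff_one_le_mul₀' (exp_pos _)]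
  nlinarith

lemma exp_sub_one_le_of_le {x a b : ℝ} (hxa : x ≤ a) (hxb : x ≤ b) (hb : 0 ≤ b) :
    exp x - 1 ≤ b * exp a := by
  rcases le_or_gt x 0 with hx | hx
  · have := exp_le_one_iff.2 hx
    have := exp_pos a
    nlinarith
  · have hmul : exp x * (1 - x) ≤ 1 := by
      simpa [← exp_add] using mul_le_mul_of_nonneg_left (one_sub_le_exp_neg x) (exp_pos x).le
    calc exp x - 1 ≤ x * exp x := by linarith
      _ ≤ b * exp a := mul_le_mul hxb (exp_le_exp.2 hxa) (exp_pos x).le hb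

lemma two_le_exp_three_div_four : (2 : ℝ) ≤ exp (3 / 4) := by
  have h4 := sum_le_exp_of_nonneg (by norm_num : (0 : ℝ) ≤ 3 / 4) 4
  norm_num [sum_range_succ, Nat.factorial] at h4
  linarith

lemma sum_range_natCast_id (k : ℕ) : ∑ j ∈ range k, (j : ℝ) = k * (k - 1) / 2 := by
  induction k with
  | zero => simp
  | succ m ih => rw [sum_range_succ, ih]; push_cast; ring

lemma sum_range_natCast_sq_le (k : ℕ) : ∑ j ∈ range k, (j : ℝ) ^ 2 ≤ k ^ 3 / 3 := by
  induction k with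
  | zero => simp
  | succ m ih =>
    rw [sum_range_succ]
    push_cast
    nlinarith [m.cast_nonneg (α := ℝ)]

lemma sum_range_div_add_two_mul_div_sq_le {n k : ℕ} (hk : 2 * k ≤ n) :
    ∑ j ∈ range k, ((j / n : ℝ) + 2 * (j / n) ^ 2) ≤ 5 / 6 * ((k : ℝ) ^ 2 / n) := by
  obtain rfl | hn := Nat.eq_zero_or_pos n
  · simp
  have hn : (0 : ℝ) < n := by exact_mod_cast hn
  have hkn : 2 * (k : ℝ) ≤ n := by exact_mod_cast hk
  have hsum : ∑ j ∈ range k, ((j / n : ℝ) + 2 * (j / n) ^ 2) =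
      k * (k - 1) / (2 * n) + 2 * (∑ j ∈ range k, (j : ℝ) ^ 2) / n ^ 2 := by
    simp only [sum_add_distrib, div_pow, ← mul_sum, ← sum_div, sum_range_natCast_id]
    ring
  have hsq := sum_range_natCast_sq_le k
  have hcube : (k : ℝ) ^ 3 * n ≤ k ^ 2 * n ^ 2 / 2 := by
    nlinarith [mul_nonneg (mul_nonneg (sq_nonneg (k : ℝ)) hn.le) (sub_nonneg.2 hkn)]
  rw [hsum, div_add_div _ _ (by positivity) (by positivity), div_le_iff₀ (by positivity)]
  field_simp
  nlinarith [mul_le_mul_of_nonneg_left hsq (by positivity : (0 : ℝ) ≤ n)]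

lemma prod_one_sub_le_exp_neg_sum {ι : Type*} (s : Finset ι) {a : ι → ℝ}
    (ha : ∀ i ∈ s, a i ≤ 1) : ∏ i ∈ s, (1 - a i) ≤ exp (-∑ i ∈ s, a i) := by
  rw [← sum_neg_distrib, exp_sum]
  exact prod_le_prod (fun i hi => sub_nonneg.2 (ha i hi)) fun i _ => one_sub_le_exp_neg _

lemma exp_neg_sum_le_prod_one_sub {ι : Type*} (s : Finset ι) {a : ι → ℝ}
    (ha₀ : ∀ i ∈ s, 0 ≤ a i) (ha : ∀ i ∈ s, a i ≤ 1 / 2) :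
    exp (-∑ i ∈ s, (a i + 2 * a i ^ 2)) ≤ ∏ i ∈ s, (1 - a i) := by
  rw [← sum_neg_distrib, exp_sum]
  exact prod_le_prod (fun i _ => (exp_pos _).le) fun i hi =>
    exp_neg_add_two_mul_sq_le_one_sub (ha₀ i hi) (ha i hi)

lemma choose_mul_pow_eq {n k : ℕ} (hk : k ≤ n) (p : ℝ) :
    (n.choose k : ℝ) * p ^ k = (n * p) ^ k / k ! * ∏ j ∈ range k, (1 - j / n : ℝ) := by
  have hdesc : (k ! : ℝ) * n.choose k = ∏ j ∈ range k, ((n : ℝ) - j) := by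
    rw [← Nat.cast_mul, ← Nat.descFactorial_eq_factorial_mul_choose,
      Nat.descFactorial_eq_prod_range, Nat.cast_prod]
    exact prod_congr rfl fun j hj => Nat.cast_sub ((mem_range.1 hj).le.trans hk)
  have hprod : (n * p) ^ k * ∏ j ∈ range k, (1 - j / n : ℝ) =
      (∏ j ∈ range k, ((n : ℝ) - j)) * p ^ k := by
    calc (n * p) ^ k * ∏ j ∈ range k, (1 - j / n : ℝ)
        = ∏ j ∈ range k, (n * p * (1 - j / n) : ℝ) := by
          rw [prod_mul_distrib, prod_const, card_range]
      _ = ∏ j ∈ range k, (((n : ℝ) - j) * p) := by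
          refine prod_congr rfl fun j hj => ?_
          have : (n : ℝ) ≠ 0 := Nat.cast_ne_zero.2 (by grind)
          field_simp
      _ = (∏ j ∈ range k, ((n : ℝ) - j)) * p ^ k := by
          rw [prod_mul_distrib, prod_const, card_range]
  rw [mul_comm, div_mul_eq_mul_div, hprod, ← hdesc]
  field_simp

noncomputable def binomialPoissonRatio (n : ℕ) (p : ℝ) (k : ℕ) : ℝ :=
  (∏ j ∈ range k, (1 - j / n : ℝ)) * (1 - p) ^ (n - k) * exp (n * p)

lemma binomial_eq_poisson_mul_binomialPoissonRatio {n k : ℕ} (hk : k ≤ n) (p : ℝ) :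
    (n.choose k : ℝ) * p ^ k * (1 - p) ^ (n - k) =
      exp (-(n * p)) * (n * p) ^ k / k ! * binomialPoissonRatio n p k := by
  rw [choose_mul_pow_eq hk, binomialPoissonRatio, exp_neg]
  field_simp

section

variable {n k : ℕ} {p : ℝ}

lemma prod_range_one_sub_div_nonneg (hk : k ≤ n) : 0 ≤ ∏ j ∈ range k, (1 - j / n : ℝ) :=
  prod_nonneg fun j hj => sub_nonneg.2 <|
    div_le_one_of_le₀ (by exact_mod_cast (mem_range.1 hj).le.trans hk) n.cast_nonneg

lemma binomialPoissonRatio_nonneg (hk : k ≤ n) (hp : p ≤ 1) : 0 ≤ binomialPoissonRatio n p k :=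
  mul_nonneg (mul_nonneg (prod_range_one_sub_div_nonneg hk) (pow_nonneg (by linarith) _))
    (exp_pos _).le

lemma binomialPoissonRatio_le_exp (hk : k ≤ n) (hp : p ≤ 1) :
    binomialPoissonRatio n p k ≤ exp (k * p - k * (k - 1) / (2 * n)) := by
  have hQ := prod_one_sub_le_exp_neg_sum (range k) (a := fun j : ℕ => (j / n : ℝ)) fun j hj =>
    div_le_one_of_le₀ (by exact_mod_cast (mem_range.1 hj).le.trans hk) n.cast_nonneg
  have hR := prod_one_sub_le_exp_neg_sum (range (n - k)) (a := fun _ => p) fun _ _ => hp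
  rw [prod_const, card_range, sum_const, card_range, nsmul_eq_mul, Nat.cast_sub hk] at hR
  rw [← sum_div, sum_range_natCast_id] at hQ
  calc binomialPoissonRatio n p k
      ≤ exp (-(k * (k - 1) / 2 / n)) * exp (-((n - k) * p)) * exp (n * p) := by
        unfold binomialPoissonRatio
        gcongr
    _ = exp (k * p - k * (k - 1) / (2 * n)) := by
        rw [← exp_add, ← exp_add]
        ring_nf

lemma exp_le_binomialPoissonRatio (hk : 2 * k ≤ n) (hp₀ : 0 ≤ p) (hp : p ≤ 1 / 2) :
    exp (k * p - ∑ j ∈ range k, ((j / n : ℝ) + 2 * (j / n) ^ 2) - 2 * (n - k) * p ^ 2) ≤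
      binomialPoissonRatio n p k := by
  have hQ := exp_neg_sum_le_prod_one_sub (range k) (a := fun j : ℕ => (j / n : ℝ))
    (fun _ _ => by positivity) fun j hj => by
      obtain ⟨h2j, hn⟩ : 2 * j ≤ n ∧ 0 < n := by have := mem_range.1 hj; omega
      rw [div_le_iff₀ (by exact_mod_cast hn)]
      have : 2 * (j : ℝ) ≤ n := by exact_mod_cast h2j
      linarith
  have hR := exp_neg_sum_le_prod_one_sub (range (n - k)) (a := fun _ => p) (fun _ _ => hp₀)
    fun _ _ => hp
  rw [prod_const, card_range, sum_const, card_range, nsmul_eq_mul, Nat.cast_sub (by omega)] at hR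
  calc exp (k * p - ∑ j ∈ range k, ((j / n : ℝ) + 2 * (j / n) ^ 2) - 2 * (n - k) * p ^ 2)
      = exp (-∑ j ∈ range k, ((j / n : ℝ) + 2 * (j / n) ^ 2)) * exp (-((n - k) * (p + 2 * p ^ 2)))
          * exp (n * p) := by
        rw [← exp_add, ← exp_add]
        congr 1
        ring
    _ ≤ binomialPoissonRatio n p k := by
        unfold binomialPoissonRatio
        have := prod_range_one_sub_div_nonneg (n := n) (by omega : k ≤ n)
        gcongr

lemma binomialPoissonRatio_sub_one_le (hk : k ≤ n) (hp : p ≤ 1) (h : n * p ^ 2 ≤ 1 / 2) :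
    binomialPoissonRatio n p k - 1 ≤ exp (3 / 4) * ((k : ℝ) ^ 2 / n + n * p ^ 2) := by
  obtain rfl | hn := Nat.eq_zero_or_pos n
  · obtain rfl : k = 0 := Nat.le_zero.1 hk
    simp [binomialPoissonRatio]
  have hn : (0 : ℝ) < n := by exact_mod_cast hn
  have hkn : (k : ℝ) ≤ n := by exact_mod_cast hk
  have hkk : 0 ≤ (k : ℝ) * (k - 1) := by
    rcases k.eq_zero_or_pos with rfl | hk₀
    · simp
    · have : (1 : ℝ) ≤ k := by exact_mod_cast hk₀
      nlinarith
  set D : ℝ := (k : ℝ) ^ 2 / n + n * p ^ 2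
  set x : ℝ := k * p - k * (k - 1) / (2 * n) with hx
  have hx_eq : x = (2 * k * p * n - k * (k - 1)) / (2 * n) := by
    rw [hx]; field_simp
  have hxD : x ≤ D / 2 := by
    rw [hx_eq, div_le_iff₀ (by positivity)]
    have : D / 2 * (2 * n) = k ^ 2 + n ^ 2 * p ^ 2 := by simp only [D]; field_simp
    nlinarith [sq_nonneg (k - n * p)]
  have hx34 : x ≤ 3 / 4 := by
    rw [hx_eq, div_le_iff₀ (by positivity)]
    nlinarith [sq_nonneg (k - n * p), mul_le_mul_of_nonneg_left h hn.le]
  calc binomialPoissonRatio n p k - 1 ≤ exp x - 1 := by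
        linarith [binomialPoissonRatio_le_exp hk hp]
    _ ≤ D / 2 * exp (3 / 4) := exp_sub_one_le_of_le hx34 hxD (by positivity)
    _ ≤ exp (3 / 4) * D := by nlinarith [exp_pos (3 / 4), show 0 ≤ D by positivity]

lemma one_sub_binomialPoissonRatio_le (hk : k ≤ n) (hp₀ : 0 ≤ p) (hp : p ≤ 1 / 2) :
    1 - binomialPoissonRatio n p k ≤ exp (3 / 4) * ((k : ℝ) ^ 2 / n + n * p ^ 2) := by
  set D : ℝ := (k : ℝ) ^ 2 / n + n * p ^ 2
  have hD : 0 ≤ D := by positivity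
  suffices 1 - binomialPoissonRatio n p k ≤ 2 * D from
    this.trans (mul_le_mul_of_nonneg_right two_le_exp_three_div_four hD)
  rcases le_or_gt (1 / 2) ((k : ℝ) ^ 2 / n) with hbig | hsmall
  · have := binomialPoissonRatio_nonneg hk (p := p) (by linarith)
    have : 0 ≤ (n : ℝ) * p ^ 2 := by positivity
    linarith
  have h2k : 2 * k ≤ n := by
    rcases k.eq_zero_or_pos with rfl | hk₀
    · omega
    have hn : (0 : ℝ) < n := by exact_mod_cast hk₀.trans_le hk
    have : (1 : ℝ) ≤ k := by exact_mod_cast hk₀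
    rw [div_lt_iff₀ hn] at hsmall
    have : 2 * (k : ℝ) ≤ n := by nlinarith
    exact_mod_cast this
  have hlow := (add_one_le_exp _).trans (exp_le_binomialPoissonRatio h2k hp₀ hp)
  have hsum := sum_range_div_add_two_mul_div_sq_le h2k
  have : 0 ≤ (k : ℝ) * p := by positivity
  have : 0 ≤ (k : ℝ) * p ^ 2 := by positivity
  have : 0 ≤ (k : ℝ) ^ 2 / n := by positivity
  linarith

lemma abs_binomialPoissonRatio_sub_one_le (hn : 2 ≤ n) (hk : k ≤ n) (hp : 0 ≤ p)
    (h : n * p ^ 2 ≤ 1 / 2) :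
    |binomialPoissonRatio n p k - 1| ≤ exp (3 / 4) * ((k : ℝ) ^ 2 / n + n * p ^ 2) := by
  have hp₂ : p ≤ 1 / 2 := by
    have : (2 : ℝ) ≤ n := by exact_mod_cast hn
    nlinarith
  rw [abs_le]
  constructor
  · linarith [one_sub_binomialPoissonRatio_le hk hp hp₂]
  · exact binomialPoissonRatio_sub_one_le hk (by linarith) h

end

theorem binomial_poisson_pointwise_bound_general (n : ℕ) (hn : 2 ≤ n) (p : ℝ)
    (hp : 0 < p) (h : n * p ^ 2 ≤ 1 / 2) :
    ∀ k : ℕ, k ≤ n →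
      |(n.choose k : ℝ) * p ^ k * (1 - p) ^ (n - k) -
          Real.exp (-(n * p)) * (n * p) ^ k / (Nat.factorial k : ℝ)| ≤
        Real.exp (3 / 4) * ((n * p) ^ k / (Nat.factorial k : ℝ)) * Real.exp (-(n * p)) *
          ((k : ℝ) ^ 2 / n + n * p ^ 2) := by
  intro k hk
  rw [binomial_eq_poisson_mul_binomialPoissonRatio hk, ← mul_sub_one, abs_mul,
    abs_of_nonneg (by positivity)]
  calc _ ≤ exp (-(n * p)) * (n * p) ^ k / k ! * (exp (3 / 4) * ((k : ℝ) ^ 2 / n + n * p ^ 2)) :=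
        mul_le_mul_of_nonneg_left (abs_binomialPoissonRatio_sub_one_le hn hk hp.le h)
          (by positivity)
    _ = _ := by ring

/-- **Pointwise binomial–Poisson error bound.** Let `n ≥ 2`, `p ∈ (0,1)` with `np² ≤ 1/2`,
and let `W ∼ Binomial(n, p)`, so `P(W = k) = C(n,k) p^k (1−p)^{n−k}`.  Then for every
`0 ≤ k ≤ n`,
`|P(W = k) − e^{−np}(np)^k/k!| ≤ e^{3/4} ((np)^k/k!) e^{−np} (k²/n + np²)`. -/
theorem binomial_poisson_pointwise_bound (n : ℕ) (hn : 2 ≤ n) (p : ℝ)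
    (hp : 0 < p) (hp1 : p < 1) (h : n * p ^ 2 ≤ 1 / 2) :
    ∀ k : ℕ, k ≤ n →
      |(n.choose k : ℝ) * p ^ k * (1 - p) ^ (n - k) -
          Real.exp (-(n * p)) * (n * p) ^ k / (Nat.factorial k : ℝ)| ≤
        Real.exp (3 / 4) * ((n * p) ^ k / (Nat.factorial k : ℝ)) * Real.exp (-(n * p)) *
          ((k : ℝ) ^ 2 / n + n * p ^ 2) :=
  binomial_poisson_pointwise_bound_general n hn p hp h
end
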